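/- arXiv:1505.05389 — 7 statements merged into one kernel-verified Lean document; each statement's English description precedes it below -/
import Mathlib

section
/- Assume L1 > 0 and 0 < Γ < L1·√(3/5), so that 2/(5·Γ̃²) < 1. A point (g1, L1) with g1 ∈ (0, π) on the circle G1 = L1 is a critical point of H0 (i.e. ∂H0/∂g1 = ∂H0/∂G1 = 0 there) if and only if sin² g1 = 2/(5·Γ̃²). There are exactly two such angles in (0, π): g1min ∈ (0, π/2) and g1max = π − g1min, symmetric about π/2. Moreover H0(g1, L1) = −Γ²/L1² for every g1, so both critical points lie on the energy level H0 = −Γ²/L1². -/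
/-- The first-order quadrupolar Hamiltonian
`H0(g1, G1) = (1 − G1²/L1²)·(2 − 5·(1 − Γ²/G1²)·sin² g1) − Γ²/L1²`. -/
noncomputable def H0 (L1 Γ g1 G1 : ℝ) : ℝ :=
  (1 - G1 ^ 2 / L1 ^ 2) * (2 - 5 * (1 - Γ ^ 2 / G1 ^ 2) * Real.sin g1 ^ 2) - Γ ^ 2 / L1 ^ 2

/-- `Γ̃ = √(1 − Γ²/L1²)`. -/
noncomputable def Gammat (L1 Γ : ℝ) : ℝ := Real.sqrt (1 - Γ ^ 2 / L1 ^ 2)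

theorem critical_points_on_circle (L1 Γ : ℝ) (hL1 : 0 < L1) (hΓpos : 0 < Γ)
    (hΓ : Γ < L1 * Real.sqrt (3 / 5)) :
    2 / (5 * Gammat L1 Γ ^ 2) < 1 ∧
    (∀ g1 ∈ Set.Ioo 0 Real.pi,
      ((deriv (fun g => H0 L1 Γ g L1) g1 = 0 ∧
        deriv (fun G => H0 L1 Γ g1 G) L1 = 0) ↔
        Real.sin g1 ^ 2 = 2 / (5 * Gammat L1 Γ ^ 2))) ∧
    (∃ g1min ∈ Set.Ioo 0 (Real.pi / 2),
      {g1 | g1 ∈ Set.Ioo 0 Real.pi ∧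
          Real.sin g1 ^ 2 = 2 / (5 * Gammat L1 Γ ^ 2)}
        = {g1min, Real.pi - g1min}) ∧
    (∀ g1 : ℝ, H0 L1 Γ g1 L1 = -Γ ^ 2 / L1 ^ 2) := by
  have hL1ne : L1 ≠ 0 := ne_of_gt hL1
  have hs35 : Real.sqrt (3 / 5) ^ 2 = 3 / 5 := Real.sq_sqrt (by norm_num)
  have hΓ2 : Γ ^ 2 < L1 ^ 2 * (3 / 5) := by
    nlinarith [Real.sqrt_nonneg ((3:ℝ)/5), hΓpos, hΓ, hs35]
  have hfrac : Γ ^ 2 / L1 ^ 2 < 3 / 5 := by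
    rw [div_lt_iff₀ (by positivity)]; nlinarith
  have hpos : 0 < 1 - Γ ^ 2 / L1 ^ 2 := by linarith
  have hGam2 : Gammat L1 Γ ^ 2 = 1 - Γ ^ 2 / L1 ^ 2 := Real.sq_sqrt hpos.le
  have hc1 : 2 / (5 * Gammat L1 Γ ^ 2) < 1 := by
    rw [hGam2, div_lt_one (by linarith)]; linarith
  have hc0 : 0 < 2 / (5 * Gammat L1 Γ ^ 2) := by
    rw [hGam2]; positivity
  have hconst : ∀ g1 : ℝ, H0 L1 Γ g1 L1 = -Γ ^ 2 / L1 ^ 2 := by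
    intro g1
    simp [H0, div_self (pow_ne_zero 2 hL1ne), neg_div]
  refine ⟨hc1, ?_, ?_, hconst⟩
  · intro g1 hg1
    have hd1 : deriv (fun g => H0 L1 Γ g L1) g1 = 0 := by
      have : (fun g => H0 L1 Γ g L1) = fun _ => -Γ ^ 2 / L1 ^ 2 := funext hconst
      rw [this, deriv_const]
    have hu : HasDerivAt (fun G : ℝ => 1 - G ^ 2 / L1 ^ 2)
        (-((2 * L1 ^ 1 * 1) / L1 ^ 2)) L1 := by
      exact (((hasDerivAt_id L1).pow 2).div_const (L1 ^ 2)).const_sub 1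
    have hq : HasDerivAt (fun G : ℝ => Γ ^ 2 / G ^ 2)
        ((0 * L1 ^ 2 - Γ ^ 2 * (2 * L1 ^ 1 * 1)) / (L1 ^ 2) ^ 2) L1 := by
      exact (hasDerivAt_const L1 (Γ ^ 2)).div ((hasDerivAt_id L1).pow 2)
        (pow_ne_zero 2 hL1ne)
    have hv := ((hq.const_sub 1).const_mul 5).mul_const (Real.sin g1 ^ 2)
    have hv2 := hv.const_sub 2
    have hH := (hu.mul hv2).sub_const (Γ ^ 2 / L1 ^ 2)
    have hder : deriv (fun G => H0 L1 Γ g1 G) L1 =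
        -((2 * L1 ^ 1 * 1) / L1 ^ 2) *
          (2 - 5 * (1 - Γ ^ 2 / L1 ^ 2) * Real.sin g1 ^ 2) := by
      have := hH.deriv
      simp only [H0] at this ⊢
      rw [show (fun G : ℝ => (1 - G ^ 2 / L1 ^ 2) * (2 - 5 * (1 - Γ ^ 2 / G ^ 2) * Real.sin g1 ^ 2) - Γ ^ 2 / L1 ^ 2) = (fun x => ((fun G : ℝ => 1 - G ^ 2 / L1 ^ 2) * (fun x : ℝ => 2 - 5 * (1 - Γ ^ 2 / x ^ 2) * Real.sin g1 ^ 2) : ℝ → ℝ) x - Γ ^ 2 / L1 ^ 2) from rfl, this]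
      have h0 : (1 : ℝ) - L1 ^ 2 / L1 ^ 2 = 0 := by
        rw [div_self (pow_ne_zero 2 hL1ne)]; ring
      rw [h0]; ring
    constructor
    · rintro ⟨-, h2⟩
      rw [hder] at h2
      rw [hGam2]
      have hne : -((2 * L1 ^ 1 * 1) / L1 ^ 2) ≠ 0 := by
        simp only [pow_one, mul_one]
        rw [neg_ne_zero]
        positivity
      have := (mul_eq_zero.mp h2).resolve_left hne
      rw [eq_div_iff (by nlinarith : (5:ℝ) * (1 - Γ ^ 2 / L1 ^ 2) ≠ 0)]
      nlinarith [this]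
    · intro h
      refine ⟨hd1, ?_⟩
      rw [hder]
      rw [hGam2] at h
      have : 2 - 5 * (1 - Γ ^ 2 / L1 ^ 2) * Real.sin g1 ^ 2 = 0 := by
        rw [h]
        have hd0 : L1 ^ 2 - Γ ^ 2 ≠ 0 := by nlinarith
        field_simp
        ring
      rw [this, mul_zero]
  · set c := 2 / (5 * Gammat L1 Γ ^ 2) with hc
    have hsc0 : 0 < Real.sqrt c := Real.sqrt_pos.mpr hc0
    have hsc1 : Real.sqrt c < 1 := by
      rw [show (1:ℝ) = Real.sqrt 1 by simp]
      exact Real.sqrt_lt_sqrt hc0.le hc1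
    refine ⟨Real.arcsin (Real.sqrt c), ⟨Real.arcsin_pos.mpr hsc0,
      Real.arcsin_lt_pi_div_two.mpr hsc1⟩, ?_⟩
    have hsin_min : Real.sin (Real.arcsin (Real.sqrt c)) = Real.sqrt c :=
      Real.sin_arcsin (by linarith) (by linarith)
    have hmin0 : 0 < Real.arcsin (Real.sqrt c) := Real.arcsin_pos.mpr hsc0
    have hminpi2 : Real.arcsin (Real.sqrt c) < Real.pi / 2 :=
      Real.arcsin_lt_pi_div_two.mpr hsc1
    ext g
    simp only [Set.mem_setOf_eq, Set.mem_Ioo, Set.mem_insert_iff, Set.mem_singleton_iff]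
    constructor
    · rintro ⟨⟨hg0, hgpi⟩, hsin⟩
      have hsg : 0 < Real.sin g := Real.sin_pos_of_pos_of_lt_pi hg0 hgpi
      have hsineq : Real.sin g = Real.sqrt c := by
        rw [← Real.sqrt_sq hsg.le, hsin]
      rcases le_or_gt g (Real.pi / 2) with hle | hgt
      · left
        rw [← Real.arcsin_sin (by linarith [Real.pi_pos]) hle, hsineq]
      · right
        have h1 : Real.sin (Real.pi - g) = Real.sin g := Real.sin_pi_sub g
        have h2 : Real.pi - g ≤ Real.pi / 2 := by linarith
        have h3 : -(Real.pi / 2) ≤ Real.pi - g := by linarith [Real.pi_pos]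
        have := Real.arcsin_sin h3 h2
        rw [h1, hsineq] at this
        linarith [this]
    · rintro (rfl | rfl)
      · exact ⟨⟨hmin0, by linarith [Real.pi_pos]⟩, by
          rw [hsin_min, Real.sq_sqrt hc0.le]⟩
      · refine ⟨⟨by linarith, by linarith⟩, ?_⟩
        rw [Real.sin_pi_sub, hsin_min, Real.sq_sqrt hc0.le]
end

section
/- At each of the two critical points (g1min, L1) and (g1max, L1) of H0 on the circle G1 = L1 (where sin² g1 = 2/(5·Γ̃²), g1min ∈ (0, π/2), g1max = π − g1min), the Hessian of H0 with respect to (g1, G1) satisfies ∂²H0/∂g1² = 0 and ∂²H0/∂g1∂G1 = (10/L1)·Γ̃²·sin(2·g1) ≠ 0; consequently the Hessian determinant is strictly negative and each of the two critical points is a nondegenerate saddle (hyperbolic singularity) of H0. -/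
theorem hessian_at_critical_points (L1 Γ : ℝ) (hL1 : 0 < L1) (hΓpos : 0 < Γ)
    (hΓ : Γ < L1 * Real.sqrt (3 / 5)) (g1 : ℝ) (hg1 : g1 ∈ Set.Ioo 0 Real.pi)
    (hcrit : Real.sin g1 ^ 2 = 2 / (5 * Gammat L1 Γ ^ 2)) :
    deriv (deriv (fun g => H0 L1 Γ g L1)) g1 = 0 ∧
    deriv (fun G => deriv (fun g => H0 L1 Γ g G) g1) L1
      = (10 / L1) * Gammat L1 Γ ^ 2 * Real.sin (2 * g1) ∧
    deriv (fun G => deriv (fun g => H0 L1 Γ g G) g1) L1 ≠ 0 ∧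
    deriv (deriv (fun g => H0 L1 Γ g L1)) g1 *
        deriv (deriv (fun G => H0 L1 Γ g1 G)) L1 -
      (deriv (fun G => deriv (fun g => H0 L1 Γ g G) g1) L1) ^ 2 < 0 := by
  have hL1ne : L1 ≠ 0 := ne_of_gt hL1
  have hL2ne : L1 ^ 2 ≠ 0 := pow_ne_zero 2 hL1ne
  -- numeric facts
  have hs : Real.sqrt (3/5) ^ 2 = 3/5 := Real.sq_sqrt (by norm_num)
  have hsnn : 0 ≤ Real.sqrt (3/5) := Real.sqrt_nonneg _
  have hΓsq : Γ ^ 2 < L1 ^ 2 * (3/5) := by nlinarith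
  have hrat : Γ ^ 2 / L1 ^ 2 < 3/5 := by
    rw [div_lt_iff₀ (by positivity)]; linarith
  have hratpos : 0 < Γ ^ 2 / L1 ^ 2 := by positivity
  have hGt : Gammat L1 Γ ^ 2 = 1 - Γ ^ 2 / L1 ^ 2 := Real.sq_sqrt (by linarith)
  have hGtlb : 2/5 < Gammat L1 Γ ^ 2 := by rw [hGt]; linarith
  have hGtub : Gammat L1 Γ ^ 2 < 1 := by rw [hGt]; linarith
  -- sin and cos facts
  have hsinpos : 0 < Real.sin g1 := Real.sin_pos_of_pos_of_lt_pi hg1.1 hg1.2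
  have hsin2lt : Real.sin g1 ^ 2 < 1 := by
    rw [hcrit, div_lt_one (by nlinarith)]; nlinarith
  have hcosne : Real.cos g1 ≠ 0 := by
    intro h
    have := Real.sin_sq_add_cos_sq g1
    rw [h] at this; nlinarith
  -- Part 1: H0 restricted to G1 = L1 is constant
  have hconst : (fun g => H0 L1 Γ g L1) = fun _ => -(Γ ^ 2 / L1 ^ 2) := by
    funext g
    simp only [H0, div_self hL2ne]
    ring
  have part1 : deriv (deriv (fun g => H0 L1 Γ g L1)) g1 = 0 := by
    rw [hconst]; simp
  -- inner derivative
  have inner_deriv : ∀ G : ℝ, deriv (fun g => H0 L1 Γ g G) g1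
      = (-(5:ℝ) * (2 * Real.sin g1 * Real.cos g1)) *
        ((1 - G ^ 2 / L1 ^ 2) * (1 - Γ ^ 2 / G ^ 2)) := by
    intro G
    have hsin : HasDerivAt (fun g => Real.sin g ^ 2)
        ((2:ℝ) * Real.sin g1 ^ 1 * Real.cos g1) g1 := (Real.hasDerivAt_sin g1).pow 2
    have h2 := ((hsin.const_mul (5 * (1 - Γ ^ 2 / G ^ 2))).const_sub 2).const_mul
        (1 - G ^ 2 / L1 ^ 2)
    have h3 := h2.sub_const (Γ ^ 2 / L1 ^ 2)
    have : deriv (fun g => H0 L1 Γ g G) g1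
        = (1 - G ^ 2 / L1 ^ 2) * -(5 * (1 - Γ ^ 2 / G ^ 2) *
            ((2:ℝ) * Real.sin g1 ^ 1 * Real.cos g1)) := by
      apply HasDerivAt.deriv
      simpa [H0] using h3
    rw [this]; ring
  -- Part 2: the mixed derivative
  have hfun : (fun G => deriv (fun g => H0 L1 Γ g G) g1)
      = fun G => (-(5:ℝ) * (2 * Real.sin g1 * Real.cos g1)) *
        ((1 - G ^ 2 / L1 ^ 2) * (1 - Γ ^ 2 / G ^ 2)) := funext inner_deriv
  have hu : HasDerivAt (fun G : ℝ => 1 - G ^ 2 / L1 ^ 2)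
      (-((2:ℝ) * L1 ^ 1 / L1 ^ 2)) L1 :=
    ((hasDerivAt_pow 2 L1).div_const (L1 ^ 2)).const_sub 1
  have hq : HasDerivAt (fun G : ℝ => Γ ^ 2 / G ^ 2)
      ((0 * L1 ^ 2 - Γ ^ 2 * ((2:ℝ) * L1 ^ 1)) / (L1 ^ 2) ^ 2) L1 :=
    (hasDerivAt_const L1 (Γ ^ 2)).div (hasDerivAt_pow 2 L1) hL2ne
  have hv := hq.const_sub 1
  have hprod : HasDerivAt (fun G => (-(5:ℝ) * (2 * Real.sin g1 * Real.cos g1)) *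
      ((1 - G ^ 2 / L1 ^ 2) * (1 - Γ ^ 2 / G ^ 2))) _ L1 := (hu.mul hv).const_mul (-(5:ℝ) * (2 * Real.sin g1 * Real.cos g1))
  have part2 : deriv (fun G => deriv (fun g => H0 L1 Γ g G) g1) L1
      = (10 / L1) * Gammat L1 Γ ^ 2 * Real.sin (2 * g1) := by
    rw [hfun, hprod.deriv, hGt, Real.sin_two_mul]
    field_simp
    ring
  -- Part 3: nonzero
  have hGtpos : 0 < Gammat L1 Γ ^ 2 := by linarith
  have part3 : deriv (fun G => deriv (fun g => H0 L1 Γ g G) g1) L1 ≠ 0 := by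
    rw [part2, Real.sin_two_mul]
    apply mul_ne_zero
    apply mul_ne_zero
    · positivity
    · exact ne_of_gt hGtpos
    · exact mul_ne_zero (mul_ne_zero two_ne_zero (ne_of_gt hsinpos)) hcosne
  refine ⟨part1, part2, part3, ?_⟩
  rw [part1, zero_mul, zero_sub, neg_lt, neg_zero]
  have h2 : deriv (fun G => deriv (fun g => H0 L1 Γ g G) g1) L1 ^ 2 ≠ 0 :=
    pow_ne_zero 2 part3
  exact lt_of_le_of_ne (sq_nonneg _) (Ne.symm h2)
end

section
/- For every t ∈ ℝ one has Γ < G1h(t) and (1 − Γ²/G1h(t)²)·sin² g1h(t) = 2/5; consequently the separatrix parameterization lies in the energy level H0(g1h(t), G1h(t)) = −Γ²/L1² for all t ∈ ℝ. -/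
/-- `χ = √(2/3)·(Γ/L1)/√(1 − (5/3)·Γ²/L1²)`. -/
noncomputable def chi (L1 Γ : ℝ) : ℝ :=
  Real.sqrt (2 / 3) * (Γ / L1) / Real.sqrt (1 - (5 / 3) * Γ ^ 2 / L1 ^ 2)

/-- The `g1`-component of the separatrix: the angle in `(0, π)` with
`cos g1h(t) = −√(3/5)·sinh(A2·t)/√(χ² + (1+χ²)·sinh²(A2·t))`. -/
noncomputable def g1h (L1 Γ A2 t : ℝ) : ℝ :=
  Real.arccos (-(Real.sqrt (3 / 5)) * Real.sinh (A2 * t) /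
    Real.sqrt ((chi L1 Γ) ^ 2 + (1 + (chi L1 Γ) ^ 2) * Real.sinh (A2 * t) ^ 2))

/-- The `G1`-component of the separatrix. -/
noncomputable def G1h (L1 Γ A2 t : ℝ) : ℝ :=
  Γ * Real.sqrt (5 / 3) * Real.sqrt (1 + (3 / 5) * (L1 ^ 2 / Γ ^ 2) * Real.sinh (A2 * t) ^ 2) /
    Real.cosh (A2 * t)

set_option maxHeartbeats 1000000 in
theorem separatrix_in_energy_level (L1 Γ A2 : ℝ) (hL1 : 0 < L1) (hΓpos : 0 < Γ)
    (hΓ : Γ < L1 * Real.sqrt (3 / 5)) (hA2 : 0 < A2) :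
    ∀ t : ℝ,
      Γ < G1h L1 Γ A2 t ∧
      (1 - Γ ^ 2 / (G1h L1 Γ A2 t) ^ 2) * Real.sin (g1h L1 Γ A2 t) ^ 2 = 2 / 5 ∧
      H0 L1 Γ (g1h L1 Γ A2 t) (G1h L1 Γ A2 t) = -Γ ^ 2 / L1 ^ 2 := by
  have hL1' : L1 ≠ 0 := ne_of_gt hL1
  have hΓ' : Γ ≠ 0 := ne_of_gt hΓpos
  have hsq35 : Real.sqrt (3 / 5) ^ 2 = 3 / 5 := Real.sq_sqrt (by norm_num)
  have hΓ2 : 5 * Γ ^ 2 < 3 * L1 ^ 2 := by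
    have h := mul_lt_mul'' hΓ hΓ hΓpos.le hΓpos.le
    nlinarith [hsq35, Real.sqrt_nonneg ((3:ℝ)/5)]
  have hP : (0:ℝ) < 3 * L1 ^ 2 - 5 * Γ ^ 2 := by linarith
  have hPne : (3 * L1 ^ 2 - 5 * Γ ^ 2) ≠ 0 := ne_of_gt hP
  have hrad : (0:ℝ) < 1 - 5 / 3 * Γ ^ 2 / L1 ^ 2 := by
    have h : 1 - 5 / 3 * Γ ^ 2 / L1 ^ 2 = (3 * L1 ^ 2 - 5 * Γ ^ 2) / (3 * L1 ^ 2) := by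
      field_simp
    rw [h]
    exact div_pos hP (by positivity)
  have hchi2 : chi L1 Γ ^ 2 = 2 * Γ ^ 2 / (3 * L1 ^ 2 - 5 * Γ ^ 2) := by
    unfold chi
    rw [div_pow, mul_pow, Real.sq_sqrt (by norm_num : (0:ℝ) ≤ 2/3),
      Real.sq_sqrt hrad.le, div_pow]
    rw [div_eq_div_iff (by positivity) hPne]
    field_simp
  intro t
  set s := Real.sinh (A2 * t) with hs
  have hcosh2 : Real.cosh (A2 * t) ^ 2 = s ^ 2 + 1 := Real.cosh_sq (A2 * t)
  -- E
  have hEeq : chi L1 Γ ^ 2 + (1 + chi L1 Γ ^ 2) * s ^ 2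
      = (2 * Γ ^ 2 + (3 * L1 ^ 2 - 3 * Γ ^ 2) * s ^ 2) / (3 * L1 ^ 2 - 5 * Γ ^ 2) := by
    rw [hchi2]
    rw [eq_div_iff hPne]
    have e : 2 * Γ ^ 2 / (3 * L1 ^ 2 - 5 * Γ ^ 2) * (3 * L1 ^ 2 - 5 * Γ ^ 2) = 2 * Γ ^ 2 :=
      div_mul_cancel₀ _ hPne
    linear_combination (1 + s ^ 2) * e
  have hNpos : (0:ℝ) < 2 * Γ ^ 2 + (3 * L1 ^ 2 - 3 * Γ ^ 2) * s ^ 2 := by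
    nlinarith [sq_nonneg s, sq_nonneg Γ, mul_nonneg (show (0:ℝ) ≤ 3*L1^2 - 3*Γ^2 by nlinarith) (sq_nonneg s)]
  have hEpos : (0:ℝ) < chi L1 Γ ^ 2 + (1 + chi L1 Γ ^ 2) * s ^ 2 := by
    rw [hEeq]; exact div_pos hNpos hP
  -- sin² of g1h
  have hx2 : (-(Real.sqrt (3 / 5)) * s / Real.sqrt (chi L1 Γ ^ 2 + (1 + chi L1 Γ ^ 2) * s ^ 2)) ^ 2
      = 3 / 5 * s ^ 2 / (chi L1 Γ ^ 2 + (1 + chi L1 Γ ^ 2) * s ^ 2) := by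
    rw [div_pow, mul_pow, neg_pow, Real.sq_sqrt hEpos.le, hsq35]
    ring_nf
  have hxle : 3 / 5 * s ^ 2 / (chi L1 Γ ^ 2 + (1 + chi L1 Γ ^ 2) * s ^ 2) ≤ 1 := by
    rw [div_le_one hEpos, hEeq, le_div_iff₀ hP]
    nlinarith [sq_nonneg s, sq_nonneg Γ, mul_nonneg (sq_nonneg s) (sq_nonneg Γ)]
  have hsin2 : Real.sin (g1h L1 Γ A2 t) ^ 2
      = 1 - 3 / 5 * s ^ 2 / (chi L1 Γ ^ 2 + (1 + chi L1 Γ ^ 2) * s ^ 2) := by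
    unfold g1h
    rw [Real.sin_arccos, ← hs, Real.sq_sqrt (by rw [hx2] at *; linarith), hx2]
  -- G1h²
  have hG2 : (G1h L1 Γ A2 t) ^ 2 = (5 * Γ ^ 2 + 3 * L1 ^ 2 * s ^ 2) / (3 * (s ^ 2 + 1)) := by
    unfold G1h
    rw [div_pow, mul_pow, mul_pow, Real.sq_sqrt (by norm_num : (0:ℝ) ≤ 5/3),
      Real.sq_sqrt (by positivity : (0:ℝ) ≤ 1 + 3 / 5 * (L1 ^ 2 / Γ ^ 2) * Real.sinh (A2*t) ^ 2),
      ← hs, hcosh2]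
    rw [div_eq_div_iff (by positivity) (by positivity)]
    field_simp
  have hG1pos : 0 < G1h L1 Γ A2 t := by
    unfold G1h
    apply div_pos _ (Real.cosh_pos _)
    apply mul_pos (mul_pos hΓpos (Real.sqrt_pos.mpr (by norm_num)))
    exact Real.sqrt_pos.mpr (by positivity)
  have hΓlt : Γ < G1h L1 Γ A2 t := by
    apply lt_of_pow_lt_pow_left₀ 2 hG1pos.le
    rw [hG2, lt_div_iff₀ (by positivity)]
    have hh : Γ ^ 2 * s ^ 2 ≤ L1 ^ 2 * s ^ 2 :=
      mul_le_mul_of_nonneg_right (by nlinarith) (sq_nonneg s)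
    nlinarith [hh]
  have h2 : (1 - Γ ^ 2 / (G1h L1 Γ A2 t) ^ 2) * Real.sin (g1h L1 Γ A2 t) ^ 2 = 2 / 5 := by
    rw [hG2, hsin2, hEeq, div_div_eq_mul_div, div_div_eq_mul_div]
    have hDne : (5 * Γ ^ 2 + 3 * L1 ^ 2 * s ^ 2) ≠ 0 := by positivity
    have h1s : (3 * (s ^ 2 + 1) : ℝ) ≠ 0 := by positivity
    have hNne : (2 * Γ ^ 2 + (3 * L1 ^ 2 - 3 * Γ ^ 2) * s ^ 2) ≠ 0 := ne_of_gt hNpos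
    rw [one_sub_div hDne, one_sub_div hNne, div_mul_div_comm, div_eq_iff (mul_ne_zero hDne hNne)]
    ring
  refine ⟨hΓlt, h2, ?_⟩
  unfold H0
  linear_combination (-5 * (1 - (G1h L1 Γ A2 t) ^ 2 / L1 ^ 2)) * h2
end

section
/- There exists a nonzero real constant κ (depending only on L1, Γ and A2) such that for all t ∈ ℝ: (d/dt) g1h(t) = κ·(∂H0/∂G1)(g1h(t), G1h(t)) and (d/dt) G1h(t) = −κ·(∂H0/∂g1)(g1h(t), G1h(t)). In other words, the curve t ↦ (g1h(t), G1h(t)) is, up to a constant rescaling of time, a solution of the Hamiltonian system associated with H0. -/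
set_option maxHeartbeats 1600000 in
theorem separatrix_is_rescaled_solution (L1 Γ A2 : ℝ) (hL1 : 0 < L1) (hΓpos : 0 < Γ)
    (hΓ : Γ < L1 * Real.sqrt (3 / 5)) (hA2 : 0 < A2) :
    ∃ κ : ℝ, κ ≠ 0 ∧ ∀ t : ℝ,
      deriv (g1h L1 Γ A2) t
        = κ * deriv (fun G => H0 L1 Γ (g1h L1 Γ A2 t) G) (G1h L1 Γ A2 t) ∧
      deriv (G1h L1 Γ A2) t
        = -κ * deriv (fun g => H0 L1 Γ g (G1h L1 Γ A2 t)) (g1h L1 Γ A2 t) := by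
  have hq0 : 0 < Real.sqrt (3/5) := Real.sqrt_pos.mpr (by norm_num)
  have hq2 : Real.sqrt (3/5) ^ 2 = 3/5 := Real.sq_sqrt (by norm_num)
  have hΓ2 : 5*Γ^2 < 3*L1^2 := by nlinarith [hq2, hΓ, hΓpos, hL1, hq0]
  -- chi facts
  have hden0 : (0:ℝ) < 1 - (5/3) * Γ^2 / L1^2 := by
    rw [sub_pos, div_lt_one (by positivity)]; nlinarith
  have hx0 : 0 < chi L1 Γ := by
    unfold chi
    exact div_pos (mul_pos (Real.sqrt_pos.mpr (by norm_num)) (div_pos hΓpos hL1))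
      (Real.sqrt_pos.mpr hden0)
  have hx2 : (chi L1 Γ)^2 * (3*L1^2 - 5*Γ^2) = 2*Γ^2 := by
    unfold chi
    rw [div_pow, mul_pow, Real.sq_sqrt (by norm_num : (0:ℝ) ≤ 2/3), Real.sq_sqrt hden0.le,
      div_mul_eq_mul_div, div_eq_iff (ne_of_gt hden0)]
    field_simp
  refine ⟨-(A2 * L1^2 * chi L1 Γ)/(4*Γ), ne_of_lt (div_neg_of_neg_of_pos
    (neg_lt_zero.mpr (mul_pos (mul_pos hA2 (pow_pos hL1 2)) hx0)) (by positivity)), fun t => ?_⟩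
  -- per-t quantities
  have hc0 : 0 < Real.cosh (A2*t) := Real.cosh_pos _
  have hc2 : Real.cosh (A2*t)^2 = 1 + Real.sinh (A2*t)^2 := by rw [Real.cosh_sq]; ring
  have hD0 : 0 < (chi L1 Γ)^2 + (1+(chi L1 Γ)^2) * Real.sinh (A2*t)^2 := by
    nlinarith [sq_nonneg (Real.sinh (A2*t)), sq_nonneg (chi L1 Γ * Real.sinh (A2*t)),
      mul_pos hx0 hx0]
  have hdD0 : 0 < Real.sqrt ((chi L1 Γ)^2 + (1+(chi L1 Γ)^2) * Real.sinh (A2*t)^2) :=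
    Real.sqrt_pos.mpr hD0
  have hdD2 : Real.sqrt ((chi L1 Γ)^2 + (1+(chi L1 Γ)^2) * Real.sinh (A2*t)^2)^2
      = (chi L1 Γ)^2 + (1+(chi L1 Γ)^2) * Real.sinh (A2*t)^2 := Real.sq_sqrt hD0.le
  have hE0 : 0 < 1 + (3/5) * (L1^2/Γ^2) * Real.sinh (A2*t)^2 := by positivity
  have hdE0 : 0 < Real.sqrt (1 + (3/5) * (L1^2/Γ^2) * Real.sinh (A2*t)^2) :=
    Real.sqrt_pos.mpr hE0
  have hdE2 : Real.sqrt (1 + (3/5) * (L1^2/Γ^2) * Real.sinh (A2*t)^2)^2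
      = 1 + (3/5) * (L1^2/Γ^2) * Real.sinh (A2*t)^2 := Real.sq_sqrt hE0.le
  have hAt : HasDerivAt (fun u : ℝ => A2*u) A2 t := by simpa using (hasDerivAt_id t).const_mul A2
  have hsinh : HasDerivAt (fun u : ℝ => Real.sinh (A2*u)) (Real.cosh (A2*t) * A2) t := hAt.sinh
  have hcosh : HasDerivAt (fun u : ℝ => Real.cosh (A2*u)) (Real.sinh (A2*t) * A2) t := hAt.cosh
  have hDf := ((hsinh.pow 2).const_mul ((1+(chi L1 Γ)^2))).const_add ((chi L1 Γ)^2)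
  have hdDf := hDf.sqrt (ne_of_gt hD0)
  have hXf := (hsinh.const_mul (-(Real.sqrt (3/5)))).div hdDf (ne_of_gt hdD0)
  -- X bounds
  have hXlt : (-(Real.sqrt (3/5)) * Real.sinh (A2*t) /
      Real.sqrt ((chi L1 Γ)^2 + (1+(chi L1 Γ)^2) * Real.sinh (A2*t)^2))^2 < 1 := by
    rw [div_pow, div_lt_one (by positivity)]
    nlinarith [hq2, hdD2, mul_pos hx0 hx0, sq_nonneg (Real.sinh (A2*t)),
      sq_nonneg (chi L1 Γ * Real.sinh (A2*t))]
  have hXabs := abs_lt.mp ((sq_lt_one_iff_abs_lt_one _).mp hXlt)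
  have hXne1 : -(Real.sqrt (3/5)) * Real.sinh (A2*t) /
      Real.sqrt ((chi L1 Γ)^2 + (1+(chi L1 Γ)^2) * Real.sinh (A2*t)^2) ≠ -1 := by
    intro h; rw [h] at hXabs; norm_num at hXabs
  have hXne1' : -(Real.sqrt (3/5)) * Real.sinh (A2*t) /
      Real.sqrt ((chi L1 Γ)^2 + (1+(chi L1 Γ)^2) * Real.sinh (A2*t)^2) ≠ 1 := by
    intro h; rw [h] at hXabs; norm_num at hXabs
  have harc := (Real.hasDerivAt_arccos hXne1 hXne1').comp t hXf
  -- G1h chain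
  have hEf := ((hsinh.pow 2).const_mul ((3/5)*(L1^2/Γ^2))).const_add 1
  have hdEf := hEf.sqrt (ne_of_gt hE0)
  have hGf := (hdEf.const_mul (Γ * Real.sqrt (5/3))).div hcosh (ne_of_gt hc0)
  -- H0 partial derivatives at the point
  have hr0 : 0 < Real.sqrt (5/3) := Real.sqrt_pos.mpr (by norm_num)
  have hr2 : Real.sqrt (5/3) ^ 2 = 5/3 := Real.sq_sqrt (by norm_num)
  have hqr : Real.sqrt (3/5) * Real.sqrt (5/3) = 1 := by
    rw [← Real.sqrt_mul (by norm_num : (0:ℝ) ≤ 3/5)]; norm_num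
  have hr53 : Real.sqrt (5/3) = (5/3) * Real.sqrt (3/5) := by
    apply mul_left_cancel₀ (ne_of_gt hq0)
    rw [hqr]
    linear_combination (-5/3)*hq2
  have hG0 : 0 < G1h L1 Γ A2 t := by
    have : G1h L1 Γ A2 t = Γ * Real.sqrt (5/3) *
        Real.sqrt (1 + (3/5) * (L1^2/Γ^2) * Real.sinh (A2*t)^2) / Real.cosh (A2*t) := rfl
    rw [this]
    exact div_pos (mul_pos (mul_pos hΓpos hr0) hdE0) hc0
  have hp1 := ((hasDerivAt_pow 2 (G1h L1 Γ A2 t)).div_const (L1^2)).const_sub 1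
  have hp2 := (hasDerivAt_const (G1h L1 Γ A2 t) (Γ^2)).div (hasDerivAt_pow 2 (G1h L1 Γ A2 t))
    (by positivity)
  have hp3 := (((hp2.const_sub 1).const_mul 5).mul_const
    (Real.sin (g1h L1 Γ A2 t)^2)).const_sub 2
  have hp4 := (hp1.mul hp3).sub_const (Γ^2/L1^2)
  have hps := (Real.hasDerivAt_sin (g1h L1 Γ A2 t)).pow 2
  have hp5 := (((hps.const_mul (5 * (1 - Γ^2/(G1h L1 Γ A2 t)^2))).const_sub 2).const_mul
    (1 - (G1h L1 Γ A2 t)^2/L1^2)).sub_const (Γ^2/L1^2)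
  -- abbreviations
  set x := chi L1 Γ with hxd
  set s := Real.sinh (A2*t) with hsd
  set c := Real.cosh (A2*t) with hcd
  set q := Real.sqrt (3/5) with hqd
  set r := Real.sqrt (5/3) with hrd
  set dD := Real.sqrt (x^2+(1+x^2)*s^2) with hdDd
  set dE := Real.sqrt (1+(3/5)*(L1^2/Γ^2)*s^2) with hdEd
  set G := G1h L1 Γ A2 t with hGd
  set g := g1h L1 Γ A2 t with hgd
  have hGdef : G = Γ*r*dE/c := rfl
  have hgdef : g = Real.arccos (-q*s/dD) := rfl
  -- clean conversions
  have hXf' : HasDerivAt (fun y => -q * Real.sinh (A2*y) /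
      Real.sqrt (x^2+(1+x^2)*Real.sinh (A2*y)^2)) (-(q*A2*c*x^2)/dD^3) t := by
    refine hXf.congr_deriv (Eq.symm ?_)
    simp only [Pi.pow_apply]; rw [← hsd, ← hdDd]
    clear_value x s c q r dD dE G g
    push_cast
    field_simp
    linear_combination hdD2
  -- sqrt(1 - X^2) = x*dE/dD
  have hdE2' : Γ^2*dE^2 = Γ^2+(3/5)*L1^2*s^2 := by
    rw [hdE2]; field_simp
  have h1mX : 1 - (-q*s/dD)^2 = (x*dE/dD)^2 := by
    clear_value x s c q r dD dE G g
    field_simp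
    apply mul_left_cancel₀ (show (Γ:ℝ)^2 ≠ 0 by positivity)
    linear_combination Γ^2*hdD2 - Γ^2*s^2*hq2 - x^2*hdE2' - (s^2/5)*hx2
  have hone : Real.sqrt (1 - (-q*s/dD)^2) = x*dE/dD := by
    rw [h1mX]
    exact Real.sqrt_sq (div_nonneg (mul_nonneg hx0.le hdE0.le) hdD0.le)
  have hg1' : HasDerivAt (g1h L1 Γ A2) (q*A2*c*x/(dD^2*dE)) t := by
    have harc' := (Real.hasDerivAt_arccos hXne1 hXne1').comp t hXf'
    refine harc'.congr_deriv (Eq.symm ?_)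
    rw [hone]
    clear_value x s c q r dD dE G g
    field_simp
  have hsing : Real.sin g = x*dE/dD := by
    rw [hgdef, Real.sin_arccos, h1mX]
    exact Real.sqrt_sq (div_nonneg (mul_nonneg hx0.le hdE0.le) hdD0.le)
  have hcosg : Real.cos g = -q*s/dD := by
    rw [hgdef]
    exact Real.cos_arccos (by linarith [hXabs.1]) (by linarith [hXabs.2])
  have hGf' : HasDerivAt (G1h L1 Γ A2) (Γ*r*A2*s*((3/5)*(L1^2/Γ^2)-1)/(dE*c^2)) t := by
    refine hGf.congr_deriv (Eq.symm ?_)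
    simp only [Pi.pow_apply]; rw [← hsd, ← hdEd]
    clear_value x s c q r dD dE G g
    clear hXf hDf hdDf hGf hp1 hp2 hp3 hp4 hp5 hps hEf hdEf hg1'
    push_cast
    field_simp [hΓpos.ne', hdE0.ne', hc0.ne']
    linear_combination (-3*L1^2*s)*hc2 + (5*s)*hdE2'
  -- final goals
  have e1 : deriv (fun G' => H0 L1 Γ g G') G =
      -(↑2 * G ^ (2 - 1) / L1 ^ 2) * (2 - 5 * (1 - Γ ^ 2 / G ^ 2) * Real.sin g ^ 2) +
        (1 - G ^ 2 / L1 ^ 2) *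
          -(5 * -((0 * G ^ 2 - Γ ^ 2 * (↑2 * G ^ (2 - 1))) / (G ^ 2) ^ 2) * Real.sin g ^ 2) :=
    hp4.deriv
  have e2 : deriv (fun g' => H0 L1 Γ g' G) g =
      (1 - G ^ 2 / L1 ^ 2) *
        -(5 * (1 - Γ ^ 2 / G ^ 2) * (↑2 * Real.sin g ^ (2 - 1) * Real.cos g)) := hp5.deriv
  have goal1 : deriv (g1h L1 Γ A2) t =
      (-(A2*L1^2*x)/(4*Γ)) * deriv (fun G' => H0 L1 Γ g G') G := by
    rw [hg1'.deriv, e1, hsing, hGdef]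
    clear_value x s c q r dD dE G g
    clear hXf hDf hdDf hGf hp1 hp2 hp3 hp4 hp5 hps hEf hdEf hg1' hGf' e1 e2
    push_cast
    field_simp [hΓpos.ne', hdE0.ne', hc0.ne', hdD0.ne', hL1.ne']
    linear_combination ((4)*q*r^2*c^2*Γ^3 + (-4)*r^3*dD^2*dE^2*Γ^3 + (10)*r^3*x^2*dE^4*Γ^3 + (20/3)*q^2*r*c^2*Γ^3 + (-20/3)*q*r^2*dD^2*dE^2*Γ^3 + (50/3)*q*r^2*x^2*dE^4*Γ^3 + (100/9)*q^3*c^2*Γ^3 + (-100/9)*q^2*r*dD^2*dE^2*Γ^3 + (250/9)*q^2*r*x^2*dE^4*Γ^3 + (-500/27)*q^3*dD^2*dE^2*Γ^3 + (1250/27)*q^3*x^2*dE^4*Γ^3) * hr53 + ((500/27)*q^2*c^2*Γ^3 + (-2500/81)*q^2*dD^2*dE^2*Γ^3 + (6250/81)*q^2*x^2*dE^4*Γ^3 + (100/9)*c^2*Γ^3 + (-500/27)*dD^2*dE^2*Γ^3 + (1250/27)*x^2*dE^4*Γ^3) * hq2 + ((-10)*c^2*x^2*L1^2*Γ + (20/3)*Γ^3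 + (-10)*s^2*x^2*L1^2*Γ + (-10)*x^2*L1^2*Γ) * hc2 + ((-100/9)*dE^2*Γ^3) * hdD2 + ((250/9)*x^2*dE^2*Γ + (50/3)*x^2*Γ + (50/3)*s^2*x^2*Γ) * hdE2' + ((-10/3)*s^2*Γ + (-10/3)*Γ + (50/9)*s^2*dE^2*Γ) * hx2
  -- goal 2
  have goal2 : deriv (G1h L1 Γ A2) t =
      -((-(A2*L1^2*x)/(4*Γ))) * deriv (fun g' => H0 L1 Γ g' G) g := by
    rw [hGf'.deriv, e2, hsing, hcosg, hGdef]
    clear_value x s c q r dD dE G g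
    clear hXf hDf hdDf hGf hp1 hp2 hp3 hp4 hp5 hps hEf hdEf hg1' hGf' e1 e2 goal1
    push_cast
    field_simp [hΓpos.ne', hdE0.ne', hc0.ne', hdD0.ne', hL1.ne']
    linear_combination ((12)*r^2*s*dD^2*L1^2 + (-20)*r^2*s*dD^2*Γ^2 + (-50)*q*r*c^2*s*x^2*dE^2*L1^2 + (50)*q*r^3*s*x^2*dE^4*Γ^2 + (-50)*q*r*c^2*s*x^2*dE^2*Γ^2 + (20)*q*r*s*dD^2*L1^2 + (-100/3)*q*r*s*dD^2*Γ^2 + (-250/3)*q^2*c^2*s*x^2*dE^2*L1^2 + (250/3)*q^2*r^2*s*x^2*dE^4*Γ^2 + (-250/3)*q^2*c^2*s*x^2*dE^2*Γ^2 + (100/3)*q^2*s*dD^2*L1^2 + (-500/9)*q^2*s*dD^2*Γ^2 + (1250/9)*q^3*r*s*x^2*dE^4*Γ^2 + (6250/27)*q^4*s*x^2*dE^4*Γ^2) * hr53 + ((-1250/9)*q*c^2*s*x^2*dE^2*L1^2 + (-1250/9)*q*c^2*s*x^2*dE^2*Γ^2 + (500/9)*q*s*dD^2*L1^2 + (-2500/27)*q*s*dD^2*Γ^2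 + (31250/81)*q^3*s*x^2*dE^4*Γ^2 + (6250/27)*q*s*x^2*dE^4*Γ^2) * hq2 + ((50)*q*c^2*s*x^2*L1^2 + (-250/3)*q*s*x^2*dE^2*L1^2 + (-250/3)*q*s*x^2*dE^2*Γ^2 + (50)*q*s^3*x^2*L1^2 + (50)*q*s*x^2*L1^2) * hc2 + ((100/3)*q*s*L1^2 + (-500/9)*q*s*Γ^2) * hdD2 + ((1250/9)*q*s*x^2*dE^2 + (-250/3)*q*s^3*x^2 + (-250/3)*q*s*x^2 + (-500/9)*q*s) * hdE2' + ((-250/9)*q*s*dE^2 + (250/9)*q*s^3 + (250/9)*q*s) * hx2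
  exact ⟨goal1, goal2⟩
end

section
/- As t → +∞, cos g1h(t) → −√(3/(5(1+χ²))) and G1h(t) → L1; as t → −∞, cos g1h(t) → +√(3/(5(1+χ²))) and G1h(t) → L1. The two limit angles g1min, g1max ∈ (0, π) (with cos g1max = −√(3/(5(1+χ²))) = −cos g1min) satisfy sin² g1 = 2/(5·Γ̃²), i.e. they are exactly the two saddle points of H0 on the circle G1 = L1; hence the separatrix is a heteroclinic connection between these two saddles. Moreover γ2(t) → ± arctan(1/χ) as t → ±∞. -/
open Filter

/-- The transient part of the `γ`-component of the separatrix. -/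
noncomputable def gamma2 (L1 Γ A2 t : ℝ) : ℝ :=
  Real.arctan ((chi L1 Γ)⁻¹ * Real.tanh (A2 * t))

section helpers
open Real
lemma sinh_top : Tendsto Real.sinh atTop atTop := by
  apply tendsto_atTop_atTop.2
  intro b
  exact ⟨Real.arsinh b, fun a ha => by
    rw [← Real.sinh_arsinh b]; exact Real.sinh_le_sinh.2 ha⟩

lemma sinh_bot : Tendsto Real.sinh atBot atBot := by
  apply tendsto_atBot_atBot.2
  intro b
  exact ⟨Real.arsinh b, fun a ha => by
    rw [← Real.sinh_arsinh b]; exact Real.sinh_le_sinh.2 ha⟩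

lemma cosh_eq_sqrt (u : ℝ) : Real.sqrt (1 + Real.sinh u ^ 2) = Real.cosh u := by
  rw [← Real.cosh_sq', Real.sqrt_sq (Real.cosh_pos u).le]

lemma sq_atBot : Tendsto (fun s : ℝ => s ^ 2) atBot atTop := by
  have h : Tendsto (fun s : ℝ => (-s) ^ 2) atBot atTop :=
    (tendsto_pow_atTop two_ne_zero).comp tendsto_neg_atBot_atTop
  simpa using h

lemma aux_top (a b : ℝ) (ha : 0 ≤ a) (hb : 0 < b) :
    Tendsto (fun s : ℝ => s / Real.sqrt (a + b * s ^ 2)) atTop (nhds (1 / Real.sqrt b)) := by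
  have hb' : Real.sqrt b ≠ 0 := (Real.sqrt_pos.mpr hb).ne'
  have h0 : Tendsto (fun s : ℝ => a / s ^ 2 + b) atTop (nhds b) := by
    have := (tendsto_const_nhds (x := a)).div_atTop (tendsto_pow_atTop two_ne_zero)
    simpa using this.add_const b
  have h1 : Tendsto (fun s : ℝ => 1 / Real.sqrt (a / s ^ 2 + b)) atTop
      (nhds (1 / Real.sqrt b)) := tendsto_const_nhds.div h0.sqrt hb'
  apply h1.congr'
  filter_upwards [eventually_gt_atTop (0:ℝ)] with s hs
  have hX : 0 < Real.sqrt (a / s ^ 2 + b) := Real.sqrt_pos.mpr (by positivity)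
  have key : Real.sqrt (a + b * s ^ 2) = s * Real.sqrt (a / s ^ 2 + b) := by
    rw [show a + b * s ^ 2 = s ^ 2 * (a / s ^ 2 + b) by field_simp,
      Real.sqrt_mul (sq_nonneg s), Real.sqrt_sq hs.le]
  rw [key]
  field_simp

lemma aux_bot (a b : ℝ) (ha : 0 ≤ a) (hb : 0 < b) :
    Tendsto (fun s : ℝ => s / Real.sqrt (a + b * s ^ 2)) atBot (nhds (-(1 / Real.sqrt b))) := by
  have hb' : Real.sqrt b ≠ 0 := (Real.sqrt_pos.mpr hb).ne'
  have h0 : Tendsto (fun s : ℝ => a / s ^ 2 + b) atBot (nhds b) := by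
    have := (tendsto_const_nhds (x := a)).div_atTop sq_atBot
    simpa using this.add_const b
  have h1 : Tendsto (fun s : ℝ => -(1 / Real.sqrt (a / s ^ 2 + b))) atBot
      (nhds (-(1 / Real.sqrt b))) := (tendsto_const_nhds.div h0.sqrt hb').neg
  apply h1.congr'
  filter_upwards [eventually_lt_atBot (0:ℝ)] with s hs
  have hX : 0 < Real.sqrt (a / s ^ 2 + b) := Real.sqrt_pos.mpr (by positivity)
  have key : Real.sqrt (a + b * s ^ 2) = (-s) * Real.sqrt (a / s ^ 2 + b) := by
    rw [show a + b * s ^ 2 = (-s) ^ 2 * (a / s ^ 2 + b) by field_simp [hs.ne],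
      Real.sqrt_mul (sq_nonneg (-s)), Real.sqrt_sq (by linarith)]
  rw [key]
  field_simp
  rw [div_self hs.ne]

lemma tanh_eq (u : ℝ) : Real.tanh u = Real.sinh u / Real.sqrt (1 + 1 * Real.sinh u ^ 2) := by
  rw [Real.tanh_eq_sinh_div_cosh, one_mul, cosh_eq_sqrt]

lemma tanh_top : Tendsto Real.tanh atTop (nhds 1) := by
  have h : Tendsto (fun u => Real.sinh u / Real.sqrt (1 + Real.sinh u ^ 2)) atTop (nhds 1) := by
    simpa [Function.comp_def] using (aux_top 1 1 zero_le_one one_pos).comp sinh_top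
  exact h.congr fun u => by rw [← one_mul (Real.sinh u ^ 2), ← _root_.tanh_eq]

lemma tanh_bot : Tendsto Real.tanh atBot (nhds (-1)) := by
  have h : Tendsto (fun u => Real.sinh u / Real.sqrt (1 + Real.sinh u ^ 2)) atBot (nhds (-1)) := by
    simpa [Function.comp_def] using (aux_bot 1 1 zero_le_one one_pos).comp sinh_bot
  exact h.congr fun u => by rw [← one_mul (Real.sinh u ^ 2), ← _root_.tanh_eq]

lemma alg1 (q : ℝ) (h2 : 1 - 5/3*q ≠ 0) :
    1 + 2/3*q/(1 - 5/3*q) = (1-q)/(1-5/3*q) := by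
  calc 1 + 2/3*q/(1-5/3*q) = (1-5/3*q)/(1-5/3*q) + 2/3*q/(1-5/3*q) := by rw [div_self h2]
    _ = ((1-5/3*q) + 2/3*q)/(1-5/3*q) := by rw [← add_div]
    _ = (1-q)/(1-5/3*q) := by ring

lemma alg2 (q : ℝ) (h1 : 1 - q ≠ 0) (h2 : 1 - 5/3*q ≠ 0) :
    1 - 3/(5*((1-q)/(1-5/3*q))) = 2/(5*(1-q)) := by
  field_simp
  ring

lemma derivG (L1 Γ g : ℝ) (hL1 : L1 ≠ 0) (hne : 1 - Γ ^ 2 / L1 ^ 2 ≠ 0)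
    (hsin : Real.sin g ^ 2 = 2 / (5 * (1 - Γ ^ 2 / L1 ^ 2))) :
    deriv (fun G => H0 L1 Γ g G) L1 = 0 := by
  have h1 : HasDerivAt (fun G : ℝ => G ^ 2) (2 * L1) L1 := by
    simpa using hasDerivAt_pow 2 L1
  have h2 : HasDerivAt (fun G : ℝ => 1 - G ^ 2 / L1 ^ 2) (-(2 * L1 / L1 ^ 2)) L1 :=
    (h1.div_const (L1 ^ 2)).const_sub 1
  have h3 : HasDerivAt (fun G : ℝ => Γ ^ 2 / G ^ 2)
      ((0 * L1 ^ 2 - Γ ^ 2 * (2 * L1)) / (L1 ^ 2) ^ 2) L1 :=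
    (hasDerivAt_const L1 (Γ ^ 2)).div h1 (pow_ne_zero 2 hL1)
  have h4 := h3.const_sub 1
  have h5 := (h4.const_mul 5).mul_const (Real.sin g ^ 2)
  have h6 := h5.const_sub 2
  have h7 := (h2.mul h6).sub_const (Γ ^ 2 / L1 ^ 2)
  have h8 : deriv (fun G => H0 L1 Γ g G) L1 =
      -(2 * L1 / L1 ^ 2) * (2 - 5 * (1 - Γ ^ 2 / L1 ^ 2) * Real.sin g ^ 2) +
        (1 - L1 ^ 2 / L1 ^ 2) *
          -(5 * -((0 * L1 ^ 2 - Γ ^ 2 * (2 * L1)) / (L1 ^ 2) ^ 2) * Real.sin g ^ 2) := by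
    simp only [H0]; exact h7.deriv
  rw [h8]
  have e1 : (1 : ℝ) - L1 ^ 2 / L1 ^ 2 = 0 := by rw [div_self (pow_ne_zero 2 hL1), sub_self]
  have hne' : L1 ^ 2 - Γ ^ 2 ≠ 0 := by
    intro h
    apply hne
    have hΓL : Γ ^ 2 = L1 ^ 2 := by linarith
    rw [hΓL, div_self (pow_ne_zero 2 hL1), sub_self]
  have e2 : 2 - 5 * (1 - Γ ^ 2 / L1 ^ 2) * Real.sin g ^ 2 = 0 := by
    rw [hsin]; field_simp [hne', hL1]; ring
  rw [e1, e2]; ring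

end helpers

set_option maxHeartbeats 1000000 in
theorem separatrix_is_heteroclinic (L1 Γ A2 : ℝ) (hL1 : 0 < L1) (hΓpos : 0 < Γ)
    (hΓ : Γ < L1 * Real.sqrt (3 / 5)) (hA2 : 0 < A2) :
    Tendsto (fun t => Real.cos (g1h L1 Γ A2 t)) atTop
      (nhds (-Real.sqrt (3 / (5 * (1 + (chi L1 Γ) ^ 2))))) ∧
    Tendsto (fun t => Real.cos (g1h L1 Γ A2 t)) atBot
      (nhds (Real.sqrt (3 / (5 * (1 + (chi L1 Γ) ^ 2))))) ∧
    Tendsto (G1h L1 Γ A2) atTop (nhds L1) ∧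
    Tendsto (G1h L1 Γ A2) atBot (nhds L1) ∧
    (∃ g1min ∈ Set.Ioo 0 Real.pi, ∃ g1max ∈ Set.Ioo 0 Real.pi,
      Real.cos g1min = Real.sqrt (3 / (5 * (1 + (chi L1 Γ) ^ 2))) ∧
      Real.cos g1max = -Real.sqrt (3 / (5 * (1 + (chi L1 Γ) ^ 2))) ∧
      Real.sin g1min ^ 2 = 2 / (5 * Gammat L1 Γ ^ 2) ∧
      Real.sin g1max ^ 2 = 2 / (5 * Gammat L1 Γ ^ 2) ∧
      deriv (fun g => H0 L1 Γ g L1) g1min = 0 ∧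
      deriv (fun G => H0 L1 Γ g1min G) L1 = 0 ∧
      deriv (fun g => H0 L1 Γ g L1) g1max = 0 ∧
      deriv (fun G => H0 L1 Γ g1max G) L1 = 0) ∧
    Tendsto (gamma2 L1 Γ A2) atTop (nhds (Real.arctan (1 / chi L1 Γ))) ∧
    Tendsto (gamma2 L1 Γ A2) atBot (nhds (-Real.arctan (1 / chi L1 Γ))) := by
  have hL1' : L1 ≠ 0 := hL1.ne'
  have hΓ' : Γ ≠ 0 := hΓpos.ne'
  set c := chi L1 Γ with hc_def
  -- basic inequalities
  have hq : Γ ^ 2 / L1 ^ 2 < 3 / 5 := by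
    have h := mul_self_lt_mul_self hΓpos.le hΓ
    have h2 : Real.sqrt (3 / 5) * Real.sqrt (3 / 5) = 3 / 5 :=
      Real.mul_self_sqrt (by norm_num)
    rw [div_lt_iff₀ (by positivity)]
    nlinarith
  have hden : (0:ℝ) < 1 - 5 / 3 * Γ ^ 2 / L1 ^ 2 := by
    have e : (5:ℝ) / 3 * Γ ^ 2 / L1 ^ 2 = 5 / 3 * (Γ ^ 2 / L1 ^ 2) := by ring
    rw [e]; linarith
  have hGt : (0:ℝ) < 1 - Γ ^ 2 / L1 ^ 2 := by linarith
  have hc : 0 < c := by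
    rw [hc_def, chi]
    exact div_pos (mul_pos (Real.sqrt_pos.mpr (by norm_num)) (div_pos hΓpos hL1))
      (Real.sqrt_pos.mpr hden)
  have hden2 : (0:ℝ) < 1 - 5 / 3 * (Γ ^ 2 / L1 ^ 2) := by
    have e : 1 - 5 / 3 * (Γ ^ 2 / L1 ^ 2) = 1 - 5 / 3 * Γ ^ 2 / L1 ^ 2 := by ring
    rw [e]; exact hden
  have hchisq : c ^ 2 = 2 / 3 * (Γ ^ 2 / L1 ^ 2) / (1 - 5 / 3 * (Γ ^ 2 / L1 ^ 2)) := by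
    rw [hc_def, chi, div_pow, mul_pow, div_pow,
      Real.sq_sqrt (by norm_num : (0:ℝ) ≤ 2 / 3), Real.sq_sqrt hden.le]
    ring
  have h1pc : 1 + c ^ 2 = (1 - Γ ^ 2 / L1 ^ 2) / (1 - 5 / 3 * (Γ ^ 2 / L1 ^ 2)) := by
    rw [hchisq]; exact alg1 _ hden2.ne'
  have h1pc_pos : (0:ℝ) < 1 + c ^ 2 := by positivity
  -- the limit angle cosine value
  have hvlt : 3 / (5 * (1 + c ^ 2)) < 1 := by
    rw [div_lt_one (by positivity)]
    nlinarith [sq_nonneg c]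
  have hv0 : 0 < Real.sqrt (3 / (5 * (1 + c ^ 2))) := Real.sqrt_pos.mpr (by positivity)
  set v := Real.sqrt (3 / (5 * (1 + c ^ 2))) with hv_def
  have hv1 : v < 1 := by
    rw [hv_def]
    exact (Real.sqrt_lt' one_pos).2 (by rw [one_pow]; exact hvlt)
  have hvsq : v ^ 2 = 3 / (5 * (1 + c ^ 2)) := Real.sq_sqrt (by positivity)
  have hGamsq : Gammat L1 Γ ^ 2 = 1 - Γ ^ 2 / L1 ^ 2 := by
    rw [Gammat, Real.sq_sqrt hGt.le]
  have hsin2 : 1 - 3 / (5 * (1 + c ^ 2)) = 2 / (5 * (1 - Γ ^ 2 / L1 ^ 2)) := by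
    rw [h1pc]; exact alg2 _ hGt.ne' hden2.ne'
  -- filter plumbing
  have hAtop : Tendsto (fun t : ℝ => A2 * t) atTop atTop :=
    Tendsto.const_mul_atTop hA2 tendsto_id
  have hAbot : Tendsto (fun t : ℝ => A2 * t) atBot atBot :=
    (tendsto_const_mul_atBot_of_pos hA2).2 tendsto_id
  have hstop : Tendsto (fun t => Real.sinh (A2 * t)) atTop atTop := sinh_top.comp hAtop
  have hsbot : Tendsto (fun t => Real.sinh (A2 * t)) atBot atBot := sinh_bot.comp hAbot
  -- rewriting cos ∘ g1h
  have hcoseq : ∀ t, Real.cos (g1h L1 Γ A2 t) =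
      -Real.sqrt (3 / 5) * (Real.sinh (A2 * t) /
        Real.sqrt (c ^ 2 + (1 + c ^ 2) * Real.sinh (A2 * t) ^ 2)) := by
    intro t
    have hD : 0 < Real.sqrt (c ^ 2 + (1 + c ^ 2) * Real.sinh (A2 * t) ^ 2) :=
      Real.sqrt_pos.2 (add_pos_of_pos_of_nonneg (pow_pos hc 2) (by positivity))
    have hnum : Real.sqrt (3 / 5) * |Real.sinh (A2 * t)| ≤
        Real.sqrt (c ^ 2 + (1 + c ^ 2) * Real.sinh (A2 * t) ^ 2) := by
      rw [show Real.sqrt (3 / 5) * |Real.sinh (A2 * t)|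
          = Real.sqrt (3 / 5 * Real.sinh (A2 * t) ^ 2) by
        rw [Real.sqrt_mul (by norm_num : (0:ℝ) ≤ 3 / 5), Real.sqrt_sq_eq_abs]]
      apply Real.sqrt_le_sqrt
      nlinarith [sq_nonneg c, sq_nonneg (Real.sinh (A2 * t)),
        sq_nonneg (c * Real.sinh (A2 * t))]
    have hb : |(-(Real.sqrt (3 / 5))) * Real.sinh (A2 * t) /
        Real.sqrt (c ^ 2 + (1 + c ^ 2) * Real.sinh (A2 * t) ^ 2)| ≤ 1 := by
      rw [abs_div, abs_mul, abs_neg, abs_of_nonneg (Real.sqrt_nonneg _),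
        abs_of_pos hD, div_le_one hD]
      exact hnum
    simp only [g1h, ← hc_def]
    rw [Real.cos_arccos (abs_le.1 hb).1 (abs_le.1 hb).2, mul_div_assoc]
  -- limits of cos ∘ g1h
  have hcostop : Tendsto (fun t => Real.cos (g1h L1 Γ A2 t)) atTop (nhds (-v)) := by
    have key := ((aux_top (c ^ 2) (1 + c ^ 2) (sq_nonneg c) h1pc_pos).const_mul
      (-Real.sqrt (3 / 5))).comp hstop
    have hval : -Real.sqrt (3 / 5) * (1 / Real.sqrt (1 + c ^ 2)) = -v := by
      rw [hv_def, (div_div (3:ℝ) 5 (1 + c ^ 2)).symm,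
        Real.sqrt_div (by norm_num : (0:ℝ) ≤ 3 / 5)]
      ring
    rw [hval] at key
    exact key.congr fun t => (hcoseq t).symm
  have hcosbot : Tendsto (fun t => Real.cos (g1h L1 Γ A2 t)) atBot (nhds v) := by
    have key := ((aux_bot (c ^ 2) (1 + c ^ 2) (sq_nonneg c) h1pc_pos).const_mul
      (-Real.sqrt (3 / 5))).comp hsbot
    have hval : -Real.sqrt (3 / 5) * (-(1 / Real.sqrt (1 + c ^ 2))) = v := by
      rw [hv_def, (div_div (3:ℝ) 5 (1 + c ^ 2)).symm,
        Real.sqrt_div (by norm_num : (0:ℝ) ≤ 3 / 5)]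
      ring
    rw [hval] at key
    exact key.congr fun t => (hcoseq t).symm
  -- G1h limits
  have hGeq : ∀ t, G1h L1 Γ A2 t = Γ * Real.sqrt (5 / 3) *
      Real.sqrt (3 / 5 * (L1 ^ 2 / Γ ^ 2)
        + (1 - 3 / 5 * (L1 ^ 2 / Γ ^ 2)) / (1 + Real.sinh (A2 * t) ^ 2)) := by
    intro t
    have h1s : (0:ℝ) < 1 + Real.sinh (A2 * t) ^ 2 := by positivity
    simp only [G1h]
    rw [← cosh_eq_sqrt (A2 * t), mul_div_assoc, ← Real.sqrt_div (by positivity)]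
    have harg : (1 + 3 / 5 * (L1 ^ 2 / Γ ^ 2) * Real.sinh (A2 * t) ^ 2)
        / (1 + Real.sinh (A2 * t) ^ 2)
        = 3 / 5 * (L1 ^ 2 / Γ ^ 2)
          + (1 - 3 / 5 * (L1 ^ 2 / Γ ^ 2)) / (1 + Real.sinh (A2 * t) ^ 2) := by
      field_simp
      ring
    rw [harg]
  have hGlim : Tendsto (fun w : ℝ => Γ * Real.sqrt (5 / 3) *
      Real.sqrt (3 / 5 * (L1 ^ 2 / Γ ^ 2) + (1 - 3 / 5 * (L1 ^ 2 / Γ ^ 2)) / (1 + w)))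
      atTop (nhds L1) := by
    have hd : Tendsto (fun w : ℝ => (1 - 3 / 5 * (L1 ^ 2 / Γ ^ 2)) / (1 + w)) atTop
        (nhds 0) :=
      tendsto_const_nhds.div_atTop (tendsto_atTop_add_const_left _ 1 tendsto_id)
    have h0 : Tendsto (fun w : ℝ => 3 / 5 * (L1 ^ 2 / Γ ^ 2)
        + (1 - 3 / 5 * (L1 ^ 2 / Γ ^ 2)) / (1 + w)) atTop
        (nhds (3 / 5 * (L1 ^ 2 / Γ ^ 2))) := by
      simpa using tendsto_const_nhds.add hd
    have h1 := h0.sqrt.const_mul (Γ * Real.sqrt (5 / 3))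
    have hval : Γ * Real.sqrt (5 / 3) * Real.sqrt (3 / 5 * (L1 ^ 2 / Γ ^ 2)) = L1 := by
      rw [mul_assoc, ← Real.sqrt_mul (by norm_num : (0:ℝ) ≤ 5 / 3),
        show (5:ℝ) / 3 * (3 / 5 * (L1 ^ 2 / Γ ^ 2)) = (L1 / Γ) ^ 2 by rw [div_pow]; ring,
        Real.sqrt_sq (by positivity)]
      field_simp
    rw [hval] at h1
    exact h1.congr fun w => by ring
  have hGtop : Tendsto (G1h L1 Γ A2) atTop (nhds L1) := by
    have hw : Tendsto (fun t => Real.sinh (A2 * t) ^ 2) atTop atTop :=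
      (tendsto_pow_atTop two_ne_zero).comp hstop
    exact (hGlim.comp hw).congr fun t => (hGeq t).symm
  have hGbot : Tendsto (G1h L1 Γ A2) atBot (nhds L1) := by
    have hw : Tendsto (fun t => Real.sinh (A2 * t) ^ 2) atBot atTop := sq_atBot.comp hsbot
    exact (hGlim.comp hw).congr fun t => (hGeq t).symm
  -- gamma2 limits
  have hgtop : Tendsto (gamma2 L1 Γ A2) atTop (nhds (Real.arctan (1 / c))) := by
    have ht : Tendsto (fun t => c⁻¹ * Real.tanh (A2 * t)) atTop (nhds (c⁻¹ * 1)) :=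
      (tanh_top.comp hAtop).const_mul c⁻¹
    have h2 := (Real.continuous_arctan.tendsto (c⁻¹ * 1)).comp ht
    rw [show Real.arctan (c⁻¹ * 1) = Real.arctan (1 / c) by rw [mul_one, one_div]] at h2
    exact h2.congr fun t => rfl
  have hgbot : Tendsto (gamma2 L1 Γ A2) atBot (nhds (-Real.arctan (1 / c))) := by
    have ht : Tendsto (fun t => c⁻¹ * Real.tanh (A2 * t)) atBot (nhds (c⁻¹ * (-1))) :=
      (tanh_bot.comp hAbot).const_mul c⁻¹
    have h2 := (Real.continuous_arctan.tendsto (c⁻¹ * (-1))).comp ht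
    rw [show Real.arctan (c⁻¹ * (-1)) = -Real.arctan (1 / c) by
      rw [mul_neg, mul_one, Real.arctan_neg, one_div]] at h2
    exact h2.congr fun t => rfl
  -- saddle points
  have harccos_lt : ∀ x : ℝ, -1 < x → Real.arccos x < Real.pi := fun x hx =>
    lt_of_le_of_ne (Real.arccos_le_pi x)
      (fun h => absurd (Real.arccos_eq_pi.1 h) (by linarith))
  have h1v : (0:ℝ) ≤ 1 - v ^ 2 := by nlinarith
  have hsmin : Real.sin (Real.arccos v) ^ 2 = 2 / (5 * (1 - Γ ^ 2 / L1 ^ 2)) := by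
    rw [Real.sin_arccos, Real.sq_sqrt h1v, hvsq]
    exact hsin2
  have hsmax : Real.sin (Real.arccos (-v)) ^ 2 = 2 / (5 * (1 - Γ ^ 2 / L1 ^ 2)) := by
    rw [Real.sin_arccos, neg_sq, Real.sq_sqrt h1v, hvsq]
    exact hsin2
  have hconst : (fun g => H0 L1 Γ g L1) = fun _ => -(Γ ^ 2 / L1 ^ 2) := by
    funext g
    simp only [H0]
    rw [div_self (pow_ne_zero 2 hL1')]
    ring
  refine ⟨hcostop, hcosbot, hGtop, hGbot,
    ⟨Real.arccos v, ⟨Real.arccos_pos.2 hv1, harccos_lt _ (by linarith)⟩,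
      Real.arccos (-v), ⟨Real.arccos_pos.2 (by linarith), harccos_lt _ (by linarith)⟩,
      Real.cos_arccos (by linarith) hv1.le,
      Real.cos_arccos (by linarith) (by linarith),
      by rw [hGamsq]; exact hsmin,
      by rw [hGamsq]; exact hsmax,
      by rw [hconst]; exact deriv_const _ _,
      derivG L1 Γ _ hL1' hGt.ne' hsmin,
      by rw [hconst]; exact deriv_const _ _,
      derivG L1 Γ _ hL1' hGt.ne' hsmax⟩,
    hgtop, hgbot⟩
end

section
/- Let L1 > 0 and 0 < Γ < L1·√(3/5); set Γ̂ = Γ/L1 and χ = √(2/3)·Γ̂/√(1 − (5/3)·Γ̂²). Let g1 ∈ (0, π) with sin² g1 > 2/5, and define e1 = √(2/3)·(Γ/(L1·χ))·√((1 − (5/3)·(1+χ²)·cos² g1)/(1 − (5/3)·cos² g1)), cos i = √(3/5)·√(1 − (5/3)·cos² g1)/sin g1, cos γ2 = √(1 − (5/3)·cos² g1), sin γ2 = −√(5/3)·cos g1, A = (5/3)·Γ̂²·(9 − 11·cos² g1)/(1 − (5/3)·cos² g1) − 7, and B = −(5/3)·Γ̂²·(5 − 11·cos² g1)/(1 − (5/3)·cos²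 g1) + 7. Then e1·(cos g1·cos γ2·A + sin g1·sin γ2·cos i·B) = −14·√(2/3)·(Γ/(L1·χ))·(1 − (5/3)·Γ̂²)·(√(1 − (5/3)·(1+χ²)·cos² g1)/(1 − (5/3)·cos² g1))·cos g1·(1 − (5/3)·((1 − (11/7)·Γ̂²)/(1 − (5/3)·Γ̂²))·cos² g1). -/
set_option maxHeartbeats 2000000


theorem octupolar_real_part_on_separatrix (L1 Γ : ℝ) (hL1 : 0 < L1) (hΓpos : 0 < Γ)
    (hΓ : Γ < L1 * Real.sqrt (3 / 5)) (g1 : ℝ) (hg1 : g1 ∈ Set.Ioo 0 Real.pi)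
    (hsin : 2 / 5 < Real.sin g1 ^ 2)
    (χ e1 cosi cosγ2 sinγ2 A B : ℝ)
    (hχ : χ = Real.sqrt (2 / 3) * (Γ / L1) / Real.sqrt (1 - (5 / 3) * (Γ / L1) ^ 2))
    (he1 : e1 = Real.sqrt (2 / 3) * (Γ / (L1 * χ)) *
      Real.sqrt ((1 - (5 / 3) * (1 + χ ^ 2) * Real.cos g1 ^ 2) /
        (1 - (5 / 3) * Real.cos g1 ^ 2)))
    (hcosi : cosi = Real.sqrt (3 / 5) * Real.sqrt (1 - (5 / 3) * Real.cos g1 ^ 2) /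
      Real.sin g1)
    (hcosγ2 : cosγ2 = Real.sqrt (1 - (5 / 3) * Real.cos g1 ^ 2))
    (hsinγ2 : sinγ2 = -Real.sqrt (5 / 3) * Real.cos g1)
    (hA : A = (5 / 3) * (Γ / L1) ^ 2 * (9 - 11 * Real.cos g1 ^ 2) /
      (1 - (5 / 3) * Real.cos g1 ^ 2) - 7)
    (hB : B = -(5 / 3) * (Γ / L1) ^ 2 * (5 - 11 * Real.cos g1 ^ 2) /
      (1 - (5 / 3) * Real.cos g1 ^ 2) + 7) :
    e1 * (Real.cos g1 * cosγ2 * A + Real.sin g1 * sinγ2 * cosi * B)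
      = -14 * Real.sqrt (2 / 3) * (Γ / (L1 * χ)) * (1 - (5 / 3) * (Γ / L1) ^ 2) *
        (Real.sqrt (1 - (5 / 3) * (1 + χ ^ 2) * Real.cos g1 ^ 2) /
          (1 - (5 / 3) * Real.cos g1 ^ 2)) * Real.cos g1 *
        (1 - (5 / 3) * ((1 - (11 / 7) * (Γ / L1) ^ 2) / (1 - (5 / 3) * (Γ / L1) ^ 2)) *
          Real.cos g1 ^ 2) := by
  obtain ⟨hg0, hgπ⟩ := hg1
  have hs : 0 < Real.sin g1 := Real.sin_pos_of_pos_of_lt_pi hg0 hgπ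
  have hpyth : Real.sin g1 ^ 2 + Real.cos g1 ^ 2 = 1 := Real.sin_sq_add_cos_sq g1
  have hD : 0 < 1 - (5 / 3) * Real.cos g1 ^ 2 := by nlinarith
  have hsqrtD : 0 < Real.sqrt (1 - (5 / 3) * Real.cos g1 ^ 2) := Real.sqrt_pos.mpr hD
  -- Γ/L1 bound
  have hγ2 : (Γ / L1) ^ 2 < 3 / 5 := by
    have h1 : Γ / L1 < Real.sqrt (3 / 5) := (div_lt_iff₀ hL1).mpr (by linarith [hΓ, mul_comm L1 (Real.sqrt (3/5))])
    have h2 : Real.sqrt (3 / 5) ^ 2 = 3 / 5 := Real.sq_sqrt (by norm_num)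
    have h3 : 0 < Γ / L1 := div_pos hΓpos hL1
    nlinarith
  have hDγ : 0 < 1 - (5 / 3) * (Γ / L1) ^ 2 := by nlinarith
  -- χ > 0
  have hχpos : 0 < χ := by
    rw [hχ]
    apply div_pos
    · exact mul_pos (Real.sqrt_pos.mpr (by norm_num)) (div_pos hΓpos hL1)
    · exact Real.sqrt_pos.mpr hDγ
  -- √(5/3)·√(3/5) = 1
  have h53 : Real.sqrt (5 / 3) * Real.sqrt (3 / 5) = 1 := by
    rw [← Real.sqrt_mul (by norm_num)]
    norm_num
  -- sin g1 * sinγ2 * cosi = -cos g1 * √D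
  have hterm : Real.sin g1 * sinγ2 * cosi
      = -(Real.cos g1 * Real.sqrt (1 - (5 / 3) * Real.cos g1 ^ 2)) := by
    rw [hsinγ2, hcosi]
    field_simp
    rw [mul_right_comm (Real.sqrt (5 / 3)), h53, one_mul]
  -- √(N/D) = √N / √D
  have hND : Real.sqrt ((1 - (5 / 3) * (1 + χ ^ 2) * Real.cos g1 ^ 2) /
        (1 - (5 / 3) * Real.cos g1 ^ 2))
      = Real.sqrt (1 - (5 / 3) * (1 + χ ^ 2) * Real.cos g1 ^ 2) /
        Real.sqrt (1 - (5 / 3) * Real.cos g1 ^ 2) := by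
    rw [eq_div_iff hsqrtD.ne', mul_comm, ← Real.sqrt_mul hD.le,
      mul_div_cancel₀ _ hD.ne']
  have hsqD : Real.sqrt (1 - (5 / 3) * Real.cos g1 ^ 2) ^ 2
      = 1 - (5 / 3) * Real.cos g1 ^ 2 := Real.sq_sqrt hD.le
  have hbracket : A - B = -14 * (1 - (5 / 3) * (Γ / L1) ^ 2) *
      (1 - (5 / 3) * ((1 - (11 / 7) * (Γ / L1) ^ 2) / (1 - (5 / 3) * (Γ / L1) ^ 2)) *
        Real.cos g1 ^ 2) / (1 - (5 / 3) * Real.cos g1 ^ 2) := by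
    rw [hA, hB]
    have h1 : (1 - (5 / 3) * Real.cos g1 ^ 2) ≠ 0 := hD.ne'
    have h2 : (1 - (5 / 3) * (Γ / L1) ^ 2) ≠ 0 := hDγ.ne'
    set c2 := Real.cos g1 ^ 2 with hc2def
    set q := (Γ / L1) ^ 2 with hqdef
    clear_value c2 q
    have h3 : (3 : ℝ) - 5 * c2 ≠ 0 := fun h => h1 (by linarith)
    have h4 : (3 : ℝ) - 5 * q ≠ 0 := fun h => h2 (by linarith)
    field_simp
    ring
  rw [hterm, hcosγ2]
  calc e1 * (Real.cos g1 * Real.sqrt (1 - (5 / 3) * Real.cos g1 ^ 2) * A +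
        -(Real.cos g1 * Real.sqrt (1 - (5 / 3) * Real.cos g1 ^ 2)) * B)
      = (e1 * Real.sqrt (1 - (5 / 3) * Real.cos g1 ^ 2)) * (Real.cos g1 * (A - B)) := by
        ring
    _ = (Real.sqrt (2 / 3) * (Γ / (L1 * χ)) *
          Real.sqrt (1 - (5 / 3) * (1 + χ ^ 2) * Real.cos g1 ^ 2)) *
          (Real.cos g1 * (A - B)) := by
        rw [he1, hND]
        have h2 : Real.sqrt (1 - (5 / 3) * (1 + χ ^ 2) * Real.cos g1 ^ 2) /
            Real.sqrt (1 - (5 / 3) * Real.cos g1 ^ 2) *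
            Real.sqrt (1 - (5 / 3) * Real.cos g1 ^ 2)
            = Real.sqrt (1 - (5 / 3) * (1 + χ ^ 2) * Real.cos g1 ^ 2) :=
          div_mul_cancel₀ _ hsqrtD.ne'
        linear_combination (Real.sqrt (2 / 3) * (Γ / (L1 * χ)) *
          (Real.cos g1 * (A - B))) * h2
    _ = -14 * Real.sqrt (2 / 3) * (Γ / (L1 * χ)) * (1 - (5 / 3) * (Γ / L1) ^ 2) *
        (Real.sqrt (1 - (5 / 3) * (1 + χ ^ 2) * Real.cos g1 ^ 2) /
          (1 - (5 / 3) * Real.cos g1 ^ 2)) * Real.cos g1 *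
        (1 - (5 / 3) * ((1 - (11 / 7) * (Γ / L1) ^ 2) / (1 - (5 / 3) * (Γ / L1) ^ 2)) *
          Real.cos g1 ^ 2) := by
        rw [hbracket]
        have h1 : (1 - (5 / 3) * Real.cos g1 ^ 2) ≠ 0 := hD.ne'
        have h2 : (1 - (5 / 3) * (Γ / L1) ^ 2) ≠ 0 := hDγ.ne'
        set c2 := Real.cos g1 ^ 2 with hc2def
        set q := (Γ / L1) ^ 2 with hqdef
        set K := Γ / (L1 * χ) with hKdef
        clear_value c2 q K
        have h3 : (3 : ℝ) - 5 * c2 ≠ 0 := fun h => h1 (by linarith)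
        have h4 : (3 : ℝ) - 5 * q ≠ 0 := fun h => h2 (by linarith)
        field_simp
end

section
/- The function f1 is holomorphic on the strip {τ ∈ ℂ : −π < Im τ < 0} except at exactly three points: a0 = −iπ/2, a1 = −iθ, and a2 = −i(π − θ). At a1 and a2 it has simple poles with residues Res(f1, a1) = ((7 + χ²)/(2·√(1+χ²)))·e^{−c·θ} and Res(f1, a2) = −((7 + χ²)/(2·√(1+χ²)))·e^{−c·(π−θ)}. At a0 it has a pole of order two with principal part (−i·e^{−c·π/2})/(τ − a0)² + (−c·e^{−c·π/2})/(τ − a0); in particular Res(f1, a0) = −c·e^{−c·π/2}. -/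
open Complex Topology Filter

private lemma analyticAt_dslope' {f : ℂ → ℂ} {a : ℂ} (hf : AnalyticAt ℂ f a) :
    AnalyticAt ℂ (dslope f a) a := by
  obtain ⟨p, hp⟩ := hf
  exact ⟨p.fslope, hp.has_fpower_series_dslope_fslope⟩

private lemma not_analyticAt_of_pole {f : ℂ → ℂ} {a R : ℂ} (hR : R ≠ 0) {n : ℕ} (hn : n ≠ 0)
    (h : Tendsto (fun τ => (τ - a) ^ n * f τ) (𝓝[≠] a) (𝓝 R)) :
    ¬ AnalyticAt ℂ f a := by
  intro hf
  have hc : ContinuousAt (fun τ => (τ - a) ^ n * f τ) a :=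
    ((continuousAt_id.sub continuousAt_const).pow n).mul hf.continuousAt
  have h0 : Tendsto (fun τ => (τ - a) ^ n * f τ) (𝓝[≠] a) (𝓝 0) := by
    have h1 := hc.tendsto.mono_left (nhdsWithin_le_nhds : 𝓝[≠] a ≤ 𝓝 a)
    simpa [zero_pow hn] using h1
  exact hR (tendsto_nhds_unique h h0)

private lemma simple_pole' {f h : ℂ → ℂ} {a R : ℂ} (hh : AnalyticAt ℂ h a) (hR : h a = R)
    (heq : ∀ τ : ℂ, τ ≠ a → f τ = h τ / (τ - a)) :
    (R ≠ 0 → ¬ AnalyticAt ℂ f a) ∧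
    ∃ g : ℂ → ℂ, AnalyticAt ℂ g a ∧ ∀ᶠ τ in 𝓝[≠] a, f τ = R / (τ - a) + g τ := by
  subst hR
  constructor
  · intro hne
    refine not_analyticAt_of_pole hne (n := 1) one_ne_zero ?_
    have hth : Tendsto h (𝓝[≠] a) (𝓝 (h a)) := hh.continuousAt.continuousWithinAt
    refine hth.congr' ?_
    filter_upwards [self_mem_nhdsWithin] with τ (hτ : τ ≠ a)
    have hτa : τ - a ≠ 0 := sub_ne_zero.2 hτ
    rw [heq τ hτ, pow_one, mul_div_cancel₀ _ hτa]
  · refine ⟨dslope h a, analyticAt_dslope' hh, ?_⟩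
    filter_upwards [self_mem_nhdsWithin] with τ (hτ : τ ≠ a)
    have hτa : τ - a ≠ 0 := sub_ne_zero.2 hτ
    have hd : h τ = h a + (τ - a) * dslope h a τ := by
      have h1 := sub_smul_dslope h a τ
      rw [smul_eq_mul] at h1
      linear_combination -h1
    rw [heq τ hτ, hd]
    field_simp

private lemma double_pole' {f h : ℂ → ℂ} {a A B : ℂ} (hh : AnalyticAt ℂ h a)
    (hA : h a = A) (hB : deriv h a = B)
    (heq : ∀ τ : ℂ, τ ≠ a → f τ = h τ / (τ - a) ^ 2) :
    (A ≠ 0 → ¬ AnalyticAt ℂ f a) ∧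
    ∃ g : ℂ → ℂ, AnalyticAt ℂ g a ∧
      ∀ᶠ τ in 𝓝[≠] a, f τ = A / (τ - a) ^ 2 + B / (τ - a) + g τ := by
  subst hA; subst hB
  constructor
  · intro hne
    refine not_analyticAt_of_pole hne (n := 2) two_ne_zero ?_
    have hth : Tendsto h (𝓝[≠] a) (𝓝 (h a)) := hh.continuousAt.continuousWithinAt
    refine hth.congr' ?_
    filter_upwards [self_mem_nhdsWithin] with τ (hτ : τ ≠ a)
    have hτa : τ - a ≠ 0 := sub_ne_zero.2 hτ
    rw [heq τ hτ, mul_div_cancel₀ _ (pow_ne_zero 2 hτa)]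
  · refine ⟨dslope (dslope h a) a, analyticAt_dslope' (analyticAt_dslope' hh), ?_⟩
    filter_upwards [self_mem_nhdsWithin] with τ (hτ : τ ≠ a)
    have hτa : τ - a ≠ 0 := sub_ne_zero.2 hτ
    have hd : h τ = h a + (τ - a) * dslope h a τ := by
      have h1 := sub_smul_dslope h a τ
      rw [smul_eq_mul] at h1
      linear_combination -h1
    have hd2 : dslope h a τ = deriv h a + (τ - a) * dslope (dslope h a) a τ := by
      have h1 := sub_smul_dslope (dslope h a) a τ
      rw [smul_eq_mul, dslope_same] at h1
      linear_combination -h1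
    rw [heq τ hτ, hd, hd2]
    field_simp
    ring

private lemma hcoszero : ∀ y : ℝ, -Real.pi < y → y < 0 → Real.cos y = 0 → y = -(Real.pi / 2) := by
  intro y h1 h2 hcy
  rcases Real.cos_eq_zero_iff.1 hcy with ⟨k, hk⟩
  have hπ := Real.pi_pos
  have hA : 2 * (k : ℝ) + 1 < 0 := by nlinarith
  have hB : (-2 : ℝ) < 2 * (k : ℝ) + 1 := by nlinarith
  have hA' : 2 * k + 1 < 0 := by exact_mod_cast hA
  have hB' : (-2 : ℤ) < 2 * k + 1 := by exact_mod_cast hB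
  have hk1 : k = -1 := by omega
  rw [hk, hk1]
  push_cast
  ring

private lemma key : ∀ τ : ℂ, -Real.pi < τ.im → τ.im < 0 → ∀ t : ℝ,
    Complex.sinh τ = (t : ℂ) * Complex.I →
    (τ.re = 0 ∧ Real.sin τ.im = t) ∨ (τ.im = -(Real.pi / 2) ∧ Real.cosh τ.re = -t) := by
  intro τ h1 h2 t ht
  have hτ : τ = (τ.re : ℂ) + (τ.im : ℂ) * Complex.I := (Complex.re_add_im τ).symm
  rw [hτ, Complex.sinh_add, Complex.sinh_mul_I, Complex.cosh_mul_I, ← Complex.ofReal_sinh,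
    ← Complex.ofReal_cosh, ← Complex.ofReal_sin, ← Complex.ofReal_cos] at ht
  have hre := congrArg Complex.re ht
  have him := congrArg Complex.im ht
  simp only [Complex.add_re, Complex.add_im, Complex.mul_re, Complex.mul_im,
    Complex.ofReal_re, Complex.ofReal_im, Complex.I_re, Complex.I_im, mul_zero, mul_one,
    zero_mul, sub_zero, zero_sub, add_zero, zero_add, neg_zero] at hre him
  rcases mul_eq_zero.1 hre with hx | hy
  · left
    have hx0 : τ.re = 0 := Real.sinh_eq_zero.1 hx
    refine ⟨hx0, ?_⟩
    rw [hx0, Real.cosh_zero, one_mul] at him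
    exact him
  · right
    have hy2 : τ.im = -(Real.pi / 2) := hcoszero _ h1 h2 hy
    refine ⟨hy2, ?_⟩
    rw [hy2, Real.sin_neg, Real.sin_pi_div_two] at him
    linarith

/-- The integrand `f1` of the real part of the Melnikov integral. -/
noncomputable def f1 (χ c : ℝ) (τ : ℂ) : ℂ :=
  (Complex.sinh τ / (1 + Complex.sinh τ ^ 2)) *
    ((7 + 6 * Complex.sinh τ ^ 2) / ((χ : ℂ) ^ 2 + (1 + (χ : ℂ) ^ 2) * Complex.sinh τ ^ 2)) *
    Complex.exp (-Complex.I * (c : ℂ) * τ)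

set_option maxHeartbeats 1000000 in
theorem f1_singularities_in_strip (χ c : ℝ) (hχ : 0 < χ) (hc : 0 < c) :
    ∀ θ a0 a1 a2 : ℂ,
      θ = (Real.arcsin (χ / Real.sqrt (1 + χ ^ 2)) : ℝ) →
      a0 = -Complex.I * ((Real.pi : ℂ) / 2) →
      a1 = -Complex.I * θ →
      a2 = -Complex.I * ((Real.pi : ℂ) - θ) →
      (∀ τ : ℂ, -Real.pi < τ.im → τ.im < 0 → τ ≠ a0 → τ ≠ a1 → τ ≠ a2 →
        DifferentiableAt ℂ (f1 χ c) τ) ∧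
      ¬ AnalyticAt ℂ (f1 χ c) a0 ∧ ¬ AnalyticAt ℂ (f1 χ c) a1 ∧ ¬ AnalyticAt ℂ (f1 χ c) a2 ∧
      (∃ g : ℂ → ℂ, AnalyticAt ℂ g a1 ∧
        ∀ᶠ τ in 𝓝[≠] a1,
          f1 χ c τ = (((7 + χ ^ 2) / (2 * Real.sqrt (1 + χ ^ 2)) : ℝ) : ℂ) *
              Complex.exp (-(c : ℂ) * θ) / (τ - a1) + g τ) ∧
      (∃ g : ℂ → ℂ, AnalyticAt ℂ g a2 ∧
        ∀ᶠ τ in 𝓝[≠] a2,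
          f1 χ c τ = -((((7 + χ ^ 2) / (2 * Real.sqrt (1 + χ ^ 2)) : ℝ) : ℂ) *
              Complex.exp (-(c : ℂ) * ((Real.pi : ℂ) - θ))) / (τ - a2) + g τ) ∧
      (∃ g : ℂ → ℂ, AnalyticAt ℂ g a0 ∧
        ∀ᶠ τ in 𝓝[≠] a0,
          f1 χ c τ = (-Complex.I * Complex.exp (-(c : ℂ) * (Real.pi : ℂ) / 2)) / (τ - a0) ^ 2
            + (-(c : ℂ) * Complex.exp (-(c : ℂ) * (Real.pi : ℂ) / 2)) / (τ - a0) + g τ) := by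
  intro θ a0 a1 a2 hθ ha0 ha1 ha2
  set r := Real.sqrt (1 + χ ^ 2) with hrdef
  have h1χ : (0:ℝ) < 1 + χ ^ 2 := by positivity
  have hr0 : 0 < r := Real.sqrt_pos.2 h1χ
  have hr2 : r ^ 2 = 1 + χ ^ 2 := Real.sq_sqrt h1χ.le
  set s := χ / r with hsdef
  have hs0 : 0 < s := div_pos hχ hr0
  have hs1 : s < 1 := by
    rw [hsdef, div_lt_one hr0]
    nlinarith [hr2, hr0]
  have hsr : s * r = χ := div_mul_cancel₀ χ hr0.ne'
  set θr := Real.arcsin s with hθrdef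
  have hθr0 : 0 < θr := Real.arcsin_pos.2 hs0
  have hθrlt : θr < Real.pi / 2 := Real.arcsin_lt_pi_div_two.2 hs1
  have hsin : Real.sin θr = s := Real.sin_arcsin (by linarith) hs1.le
  have hcos : Real.cos θr = 1 / r := by
    rw [hθrdef, Real.cos_arcsin]
    rw [show 1 - s ^ 2 = (1 / r) ^ 2 by
      field_simp
      nlinarith [hr2]]
    exact Real.sqrt_sq (by positivity)
  -- complex cast facts
  have hrcne : (r : ℂ) ≠ 0 := Complex.ofReal_ne_zero.2 hr0.ne'
  have hrc : (r : ℂ) ^ 2 = 1 + (χ : ℂ) ^ 2 := by exact_mod_cast hr2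
  have hsrc : (s : ℂ) * (r : ℂ) = (χ : ℂ) := by exact_mod_cast hsr
  have hu : (r : ℂ) * ((r : ℂ))⁻¹ = 1 := mul_inv_cancel₀ hrcne
  have hXne : (1 + (χ : ℂ) ^ 2) ≠ 0 := by
    have h := Complex.ofReal_ne_zero.2 h1χ.ne'
    push_cast at h
    exact h
  -- the points in x*I form
  have ha1I : a1 = ((-θr : ℝ) : ℂ) * Complex.I := by rw [ha1, hθ]; push_cast; ring
  have ha2I : a2 = ((θr - Real.pi : ℝ) : ℂ) * Complex.I := by rw [ha2, hθ]; push_cast; ring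
  have ha0I : a0 = ((-(Real.pi / 2) : ℝ) : ℂ) * Complex.I := by rw [ha0]; push_cast; ring
  -- sinh/cosh values
  have hsinh1 : Complex.sinh a1 = -(s : ℂ) * Complex.I := by
    rw [ha1I, Complex.sinh_mul_I, ← Complex.ofReal_sin, Real.sin_neg, hsin]
    push_cast; ring
  have hcosh1 : Complex.cosh a1 = ((r : ℂ))⁻¹ := by
    rw [ha1I, Complex.cosh_mul_I, ← Complex.ofReal_cos, Real.cos_neg, hcos]
    push_cast; ring
  have hsinh2 : Complex.sinh a2 = -(s : ℂ) * Complex.I := by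
    rw [ha2I, Complex.sinh_mul_I, ← Complex.ofReal_sin,
      show θr - Real.pi = -(Real.pi - θr) by ring, Real.sin_neg, Real.sin_pi_sub, hsin]
    push_cast; ring
  have hcosh2 : Complex.cosh a2 = -((r : ℂ))⁻¹ := by
    rw [ha2I, Complex.cosh_mul_I, ← Complex.ofReal_cos,
      show θr - Real.pi = -(Real.pi - θr) by ring, Real.cos_neg, Real.cos_pi_sub, hcos]
    push_cast; ring
  have hsinh0 : Complex.sinh a0 = -Complex.I := by
    rw [ha0I, Complex.sinh_mul_I, ← Complex.ofReal_sin, Real.sin_neg, Real.sin_pi_div_two]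
    push_cast; ring
  have hcosh0 : Complex.cosh a0 = 0 := by
    rw [ha0I, Complex.cosh_mul_I, ← Complex.ofReal_cos, Real.cos_neg, Real.cos_pi_div_two]
    push_cast; ring
  -- exponential values
  have hexp1 : Complex.exp (-Complex.I * (c : ℂ) * a1) = Complex.exp (-(c : ℂ) * θ) := by
    rw [ha1]; congr 1; linear_combination (c : ℂ) * θ * Complex.I_sq
  have hexp2 : Complex.exp (-Complex.I * (c : ℂ) * a2) =
      Complex.exp (-(c : ℂ) * ((Real.pi : ℂ) - θ)) := by
    rw [ha2]; congr 1; linear_combination (c : ℂ) * ((Real.pi : ℂ) - θ) * Complex.I_sq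
  have hexp0 : Complex.exp (-Complex.I * (c : ℂ) * a0) =
      Complex.exp (-(c : ℂ) * (Real.pi : ℂ) / 2) := by
    rw [ha0]; congr 1; linear_combination (c : ℂ) * (Real.pi : ℂ) / 2 * Complex.I_sq
  -- rewrite f1 as a single quotient
  have f1_eq : ∀ τ : ℂ, f1 χ c τ =
      Complex.sinh τ * (7 + 6 * Complex.sinh τ ^ 2) * Complex.exp (-Complex.I * (c : ℂ) * τ) /
        ((1 + Complex.sinh τ ^ 2) *
          ((χ : ℂ) ^ 2 + (1 + (χ : ℂ) ^ 2) * Complex.sinh τ ^ 2)) := by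
    intro τ
    rw [f1, div_mul_div_comm, div_mul_eq_mul_div]
  have hscR : s ^ 2 * (1 + χ ^ 2) = χ ^ 2 := by
    rw [← hr2, hsdef]
    field_simp
  have hscC : (s : ℂ) ^ 2 * (1 + (χ : ℂ) ^ 2) = (χ : ℂ) ^ 2 := by exact_mod_cast hscR
  -- factorization of the second denominator
  have hMfac : ∀ τ : ℂ, (χ : ℂ) ^ 2 + (1 + (χ : ℂ) ^ 2) * Complex.sinh τ ^ 2
      = (1 + (χ : ℂ) ^ 2) *
          ((Complex.sinh τ - (s : ℂ) * Complex.I) * (Complex.sinh τ + (s : ℂ) * Complex.I)) := by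
    intro τ
    have hsc : (s : ℂ) ^ 2 * (1 + (χ : ℂ) ^ 2) = (χ : ℂ) ^ 2 := hscC
    linear_combination (Complex.I ^ 2) * hsc + (χ : ℂ) ^ 2 * Complex.I_sq
    -- ============ pole at a1 ============
  have hPdiff : Differentiable ℂ (fun z => Complex.sinh z + (s : ℂ) * Complex.I) :=
    Complex.differentiable_sinh.add_const _
  have hPfac1 : ∀ τ : ℂ, Complex.sinh τ + (s : ℂ) * Complex.I =
      (τ - a1) * dslope (fun z => Complex.sinh z + (s : ℂ) * Complex.I) a1 τ := by
    intro τ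
    have h1 := sub_smul_dslope (fun z => Complex.sinh z + (s : ℂ) * Complex.I) a1 τ
    rw [smul_eq_mul] at h1
    simp only [hsinh1] at h1
    linear_combination -h1 + (-(s:ℂ)*Complex.I + (s:ℂ)*Complex.I) * 1
  have hq1anal : AnalyticAt ℂ (dslope (fun z => Complex.sinh z + (s : ℂ) * Complex.I) a1) a1 :=
    analyticAt_dslope' (hPdiff.analyticAt a1)
  have hq1val : dslope (fun z => Complex.sinh z + (s : ℂ) * Complex.I) a1 a1 = ((r : ℂ))⁻¹ := by
    rw [dslope_same, ((Complex.hasDerivAt_sinh a1).add_const ((s : ℂ) * Complex.I)).deriv, hcosh1]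
  have e1c : (1 : ℂ) + (-(s : ℂ) * Complex.I) ^ 2 = ((1 - s ^ 2 : ℝ) : ℂ) := by
    push_cast; linear_combination (s : ℂ) ^ 2 * Complex.I_sq
  have hs2lt : (0 : ℝ) < 1 - s ^ 2 := by nlinarith
  have e1ne : (1 : ℂ) + (-(s : ℂ) * Complex.I) ^ 2 ≠ 0 := by
    rw [e1c]; exact Complex.ofReal_ne_zero.2 hs2lt.ne'
  have hsIne : (-(s : ℂ) * Complex.I - (s : ℂ) * Complex.I) ≠ 0 := by
    rw [show -(s : ℂ) * Complex.I - (s : ℂ) * Complex.I = (-2 * (s : ℂ)) * Complex.I by ring]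
    exact mul_ne_zero (mul_ne_zero (by norm_num) (Complex.ofReal_ne_zero.2 hs0.ne'))
      Complex.I_ne_zero
  have hUne : ((r : ℂ))⁻¹ ≠ 0 := inv_ne_zero hrcne
  have h2rne : (2 * (r : ℂ)) ≠ 0 := mul_ne_zero two_ne_zero hrcne
  have heq1 : ∀ τ : ℂ, τ ≠ a1 → f1 χ c τ =
      (Complex.sinh τ * (7 + 6 * Complex.sinh τ ^ 2) * Complex.exp (-Complex.I * (c : ℂ) * τ) /
        ((1 + Complex.sinh τ ^ 2) * ((1 + (χ : ℂ) ^ 2) *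
          ((Complex.sinh τ - (s : ℂ) * Complex.I) *
            dslope (fun z => Complex.sinh z + (s : ℂ) * Complex.I) a1 τ)))) / (τ - a1) := by
    intro τ hτ
    rw [f1_eq τ, div_div]
    congr 1
    rw [hMfac τ, hPfac1 τ]
    ring
  have hden1ne' : ((1 : ℂ) + (-(s : ℂ) * Complex.I) ^ 2) * ((1 + (χ : ℂ) ^ 2) *
      ((-(s : ℂ) * Complex.I - (s : ℂ) * Complex.I) * ((r : ℂ))⁻¹)) ≠ 0 :=
    mul_ne_zero e1ne (mul_ne_zero hXne (mul_ne_zero hsIne hUne))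
  have h1anal : AnalyticAt ℂ (fun τ =>
      Complex.sinh τ * (7 + 6 * Complex.sinh τ ^ 2) * Complex.exp (-Complex.I * (c : ℂ) * τ) /
        ((1 + Complex.sinh τ ^ 2) * ((1 + (χ : ℂ) ^ 2) *
          ((Complex.sinh τ - (s : ℂ) * Complex.I) *
            dslope (fun z => Complex.sinh z + (s : ℂ) * Complex.I) a1 τ)))) a1 := by
    apply AnalyticAt.div
    · exact ((Complex.differentiable_sinh.mul
        (((Complex.differentiable_sinh.pow 2).const_mul 6).const_add 7)).mul
        ((differentiable_fun_id.const_mul (-Complex.I * (c : ℂ))).cexp)).analyticAt a1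
    · exact ((((Complex.differentiable_sinh.pow 2).const_add 1).analyticAt a1).mul
        (analyticAt_const.mul (((Complex.differentiable_sinh.sub_const _).analyticAt a1).mul
          hq1anal)))
    · rw [hsinh1, hq1val]; exact hden1ne'
  have hval1 : Complex.sinh a1 * (7 + 6 * Complex.sinh a1 ^ 2) *
      Complex.exp (-Complex.I * (c : ℂ) * a1) /
        ((1 + Complex.sinh a1 ^ 2) * ((1 + (χ : ℂ) ^ 2) *
          ((Complex.sinh a1 - (s : ℂ) * Complex.I) *
            dslope (fun z => Complex.sinh z + (s : ℂ) * Complex.I) a1 a1))) =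
      (((7 + χ ^ 2) / (2 * r) : ℝ) : ℂ) * Complex.exp (-(c : ℂ) * θ) := by
    rw [hsinh1, hq1val, hexp1,
      show ((((7 + χ ^ 2) / (2 * r) : ℝ)) : ℂ) * Complex.exp (-(c : ℂ) * θ)
        = ((7 + (χ : ℂ) ^ 2) * Complex.exp (-(c : ℂ) * θ)) / (2 * (r : ℂ)) by push_cast; ring,
      div_eq_div_iff hden1ne' h2rne]
    linear_combination
      (-2 * (s:ℂ) * Complex.I * Complex.exp (-(c:ℂ) * θ) * (r:ℂ) * ((s:ℂ) * (r:ℂ) + (χ:ℂ))) * hsrc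
      + (-2 * (s:ℂ) * Complex.I * Complex.exp (-(c:ℂ) * θ) *
          ((7 + (χ:ℂ)^2) * (1 - (s:ℂ)^2) * ((r:ℂ))⁻¹ - (r:ℂ) * (s:ℂ)^2)) * hrc
      + (2 * (s:ℂ) * Complex.I * Complex.exp (-(c:ℂ) * θ) *
          ((7 + (χ:ℂ)^2) * (1 - (s:ℂ)^2)) * (r:ℂ)) * hu
      + (-2 * (s:ℂ)^3 * Complex.I * Complex.exp (-(c:ℂ) * θ) *
          (6 * (r:ℂ) - ((r:ℂ))⁻¹ * (7 + (χ:ℂ)^2) * (1 + (χ:ℂ)^2))) * Complex.I_sq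
  obtain ⟨hna1, hex1⟩ := simple_pole' (f := f1 χ c) h1anal hval1 heq1
  have hR1ne : (((7 + χ ^ 2) / (2 * r) : ℝ) : ℂ) * Complex.exp (-(c : ℂ) * θ) ≠ 0 :=
    mul_ne_zero (Complex.ofReal_ne_zero.2 (by positivity)) (Complex.exp_ne_zero _)
  -- ============ pole at a2 ============
  have hPfac2 : ∀ τ : ℂ, Complex.sinh τ + (s : ℂ) * Complex.I =
      (τ - a2) * dslope (fun z => Complex.sinh z + (s : ℂ) * Complex.I) a2 τ := by
    intro τ
    have h1 := sub_smul_dslope (fun z => Complex.sinh z + (s : ℂ) * Complex.I) a2 τ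
    rw [smul_eq_mul] at h1
    simp only [hsinh2] at h1
    linear_combination -h1 + (-(s:ℂ)*Complex.I + (s:ℂ)*Complex.I) * 1
  have hq2anal : AnalyticAt ℂ (dslope (fun z => Complex.sinh z + (s : ℂ) * Complex.I) a2) a2 :=
    analyticAt_dslope' (hPdiff.analyticAt a2)
  have hq2val : dslope (fun z => Complex.sinh z + (s : ℂ) * Complex.I) a2 a2 = -((r : ℂ))⁻¹ := by
    rw [dslope_same, ((Complex.hasDerivAt_sinh a2).add_const ((s : ℂ) * Complex.I)).deriv, hcosh2]
  have heq2 : ∀ τ : ℂ, τ ≠ a2 → f1 χ c τ =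
      (Complex.sinh τ * (7 + 6 * Complex.sinh τ ^ 2) * Complex.exp (-Complex.I * (c : ℂ) * τ) /
        ((1 + Complex.sinh τ ^ 2) * ((1 + (χ : ℂ) ^ 2) *
          ((Complex.sinh τ - (s : ℂ) * Complex.I) *
            dslope (fun z => Complex.sinh z + (s : ℂ) * Complex.I) a2 τ)))) / (τ - a2) := by
    intro τ hτ
    rw [f1_eq τ, div_div]
    congr 1
    rw [hMfac τ, hPfac2 τ]
    ring
  have hden2ne' : ((1 : ℂ) + (-(s : ℂ) * Complex.I) ^ 2) * ((1 + (χ : ℂ) ^ 2) *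
      ((-(s : ℂ) * Complex.I - (s : ℂ) * Complex.I) * (-((r : ℂ))⁻¹))) ≠ 0 :=
    mul_ne_zero e1ne (mul_ne_zero hXne (mul_ne_zero hsIne (neg_ne_zero.2 hUne)))
  have h2anal : AnalyticAt ℂ (fun τ =>
      Complex.sinh τ * (7 + 6 * Complex.sinh τ ^ 2) * Complex.exp (-Complex.I * (c : ℂ) * τ) /
        ((1 + Complex.sinh τ ^ 2) * ((1 + (χ : ℂ) ^ 2) *
          ((Complex.sinh τ - (s : ℂ) * Complex.I) *
            dslope (fun z => Complex.sinh z + (s : ℂ) * Complex.I) a2 τ)))) a2 := by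
    apply AnalyticAt.div
    · exact ((Complex.differentiable_sinh.mul
        (((Complex.differentiable_sinh.pow 2).const_mul 6).const_add 7)).mul
        ((differentiable_fun_id.const_mul (-Complex.I * (c : ℂ))).cexp)).analyticAt a2
    · exact ((((Complex.differentiable_sinh.pow 2).const_add 1).analyticAt a2).mul
        (analyticAt_const.mul (((Complex.differentiable_sinh.sub_const _).analyticAt a2).mul
          hq2anal)))
    · rw [hsinh2, hq2val]; exact hden2ne'
  have hval2 : Complex.sinh a2 * (7 + 6 * Complex.sinh a2 ^ 2) *
      Complex.exp (-Complex.I * (c : ℂ) * a2) /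
        ((1 + Complex.sinh a2 ^ 2) * ((1 + (χ : ℂ) ^ 2) *
          ((Complex.sinh a2 - (s : ℂ) * Complex.I) *
            dslope (fun z => Complex.sinh z + (s : ℂ) * Complex.I) a2 a2))) =
      -((((7 + χ ^ 2) / (2 * r) : ℝ) : ℂ) * Complex.exp (-(c : ℂ) * ((Real.pi : ℂ) - θ))) := by
    rw [hsinh2, hq2val, hexp2,
      show -(((((7 + χ ^ 2) / (2 * r) : ℝ)) : ℂ) * Complex.exp (-(c : ℂ) * ((Real.pi : ℂ) - θ)))
        = (-((7 + (χ : ℂ) ^ 2) * Complex.exp (-(c : ℂ) * ((Real.pi : ℂ) - θ)))) / (2 * (r : ℂ)) by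
          push_cast; ring,
      div_eq_div_iff hden2ne' h2rne]
    linear_combination
      (-2 * (s:ℂ) * Complex.I * Complex.exp (-(c:ℂ) * ((Real.pi:ℂ) - θ)) * (r:ℂ) *
        ((s:ℂ) * (r:ℂ) + (χ:ℂ))) * hsrc
      + (-2 * (s:ℂ) * Complex.I * Complex.exp (-(c:ℂ) * ((Real.pi:ℂ) - θ)) *
          ((7 + (χ:ℂ)^2) * (1 - (s:ℂ)^2) * ((r:ℂ))⁻¹ - (r:ℂ) * (s:ℂ)^2)) * hrc
      + (2 * (s:ℂ) * Complex.I * Complex.exp (-(c:ℂ) * ((Real.pi:ℂ) - θ)) *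
          ((7 + (χ:ℂ)^2) * (1 - (s:ℂ)^2)) * (r:ℂ)) * hu
      + (-2 * (s:ℂ)^3 * Complex.I * Complex.exp (-(c:ℂ) * ((Real.pi:ℂ) - θ)) *
          (6 * (r:ℂ) - ((r:ℂ))⁻¹ * (7 + (χ:ℂ)^2) * (1 + (χ:ℂ)^2))) * Complex.I_sq
  obtain ⟨hna2, hex2⟩ := simple_pole' (f := f1 χ c) h2anal hval2 heq2
  have hR2ne : -((((7 + χ ^ 2) / (2 * r) : ℝ) : ℂ) *
      Complex.exp (-(c : ℂ) * ((Real.pi : ℂ) - θ))) ≠ 0 :=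
    neg_ne_zero.2 (mul_ne_zero (Complex.ofReal_ne_zero.2 (by positivity)) (Complex.exp_ne_zero _))
  -- ============ double pole at a0 ============
  have hS0anal : AnalyticAt ℂ (dslope Complex.sinh 0) 0 :=
    analyticAt_dslope' (Complex.differentiable_sinh.analyticAt 0)
  have hS0val : dslope Complex.sinh 0 0 = 1 := by
    rw [dslope_same, Complex.deriv_sinh, Complex.cosh_zero]
  have hS0even : ∀ z : ℂ, dslope Complex.sinh 0 (-z) = dslope Complex.sinh 0 z := by
    intro z
    rcases eq_or_ne z 0 with rfl | hz
    · simp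
    · rw [dslope_of_ne _ (neg_ne_zero.2 hz), dslope_of_ne _ hz, slope_def_field, slope_def_field,
        Complex.sinh_neg, Complex.sinh_zero, sub_zero, sub_zero, sub_zero, sub_zero,
        neg_div_neg_eq]
  have hS0deriv : deriv (dslope Complex.sinh 0) 0 = 0 := by
    have h1 : deriv (dslope Complex.sinh 0) 0 = -deriv (dslope Complex.sinh 0) 0 := by
      conv_lhs => rw [show dslope Complex.sinh 0 = fun z => dslope Complex.sinh 0 (-z) from
        funext fun z => (hS0even z).symm]
      rw [deriv_comp_neg, neg_zero]
    linear_combination (1 / 2 : ℂ) * h1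
  have hsinh_fac : ∀ z : ℂ, Complex.sinh z = z * dslope Complex.sinh 0 z := by
    intro z
    have h1 := sub_smul_dslope Complex.sinh 0 z
    rw [smul_eq_mul, Complex.sinh_zero, sub_zero, sub_zero] at h1
    exact h1.symm
  have hone_sinh : ∀ τ : ℂ, 1 + Complex.sinh τ ^ 2 =
      (τ - a0) ^ 2 * (-(dslope Complex.sinh 0 (τ - a0)) ^ 2) := by
    intro τ
    have h := Complex.cosh_sq τ
    have h2 : Complex.cosh τ = (τ - a0) * dslope Complex.sinh 0 (τ - a0) * (-Complex.I) := by
      have h3 := Complex.cosh_add (τ - a0) a0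
      rw [show τ - a0 + a0 = τ by ring] at h3
      rw [h3, hcosh0, hsinh0, hsinh_fac (τ - a0)]
      ring
    rw [h2] at h
    linear_combination -h + (τ - a0) ^ 2 * (dslope Complex.sinh 0 (τ - a0)) ^ 2 * Complex.I_sq
  have heq0 : ∀ τ : ℂ, τ ≠ a0 → f1 χ c τ =
      (Complex.sinh τ * (7 + 6 * Complex.sinh τ ^ 2) * Complex.exp (-Complex.I * (c : ℂ) * τ) /
        (-(dslope Complex.sinh 0 (τ - a0)) ^ 2 *
          ((χ : ℂ) ^ 2 + (1 + (χ : ℂ) ^ 2) * Complex.sinh τ ^ 2))) / (τ - a0) ^ 2 := by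
    intro τ hτ
    rw [f1_eq τ, div_div]
    congr 1
    rw [hone_sinh τ]
    ring
  have hS0shift : AnalyticAt ℂ (fun τ : ℂ => dslope Complex.sinh 0 (τ - a0)) a0 := by
    have h2 := AnalyticAt.comp_of_eq (f := fun τ : ℂ => τ - a0) hS0anal
      ((differentiable_fun_id.sub_const a0).analyticAt a0) (by simp)
    exact h2
  have hD0one : -(dslope Complex.sinh 0 (a0 - a0)) ^ 2 *
      ((χ : ℂ) ^ 2 + (1 + (χ : ℂ) ^ 2) * Complex.sinh a0 ^ 2) = 1 := by
    rw [sub_self, hS0val, hsinh0]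
    linear_combination (-(1 + (χ : ℂ) ^ 2)) * Complex.I_sq
  have hD0ne : -(dslope Complex.sinh 0 (a0 - a0)) ^ 2 *
      ((χ : ℂ) ^ 2 + (1 + (χ : ℂ) ^ 2) * Complex.sinh a0 ^ 2) ≠ 0 := by
    rw [hD0one]; exact one_ne_zero
  have h0anal : AnalyticAt ℂ (fun τ =>
      Complex.sinh τ * (7 + 6 * Complex.sinh τ ^ 2) * Complex.exp (-Complex.I * (c : ℂ) * τ) /
        (-(dslope Complex.sinh 0 (τ - a0)) ^ 2 *
          ((χ : ℂ) ^ 2 + (1 + (χ : ℂ) ^ 2) * Complex.sinh τ ^ 2))) a0 := by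
    apply AnalyticAt.div
    · exact ((Complex.differentiable_sinh.mul
        (((Complex.differentiable_sinh.pow 2).const_mul 6).const_add 7)).mul
        ((differentiable_fun_id.const_mul (-Complex.I * (c : ℂ))).cexp)).analyticAt a0
    · exact ((hS0shift.pow 2).neg).mul
        ((((Complex.differentiable_sinh.pow 2).const_mul _).const_add _).analyticAt a0)
    · exact hD0ne
  have hA0 : Complex.sinh a0 * (7 + 6 * Complex.sinh a0 ^ 2) *
      Complex.exp (-Complex.I * (c : ℂ) * a0) /
        (-(dslope Complex.sinh 0 (a0 - a0)) ^ 2 *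
          ((χ : ℂ) ^ 2 + (1 + (χ : ℂ) ^ 2) * Complex.sinh a0 ^ 2)) =
      -Complex.I * Complex.exp (-(c : ℂ) * (Real.pi : ℂ) / 2) := by
    rw [hD0one, div_one, hsinh0, hexp0]
    linear_combination (-6 * Complex.I * Complex.exp (-(c : ℂ) * (Real.pi : ℂ) / 2)) *
      Complex.I_sq
  have hS0d : HasDerivAt (dslope Complex.sinh 0) 0 0 := by
    have h1 := hS0anal.differentiableAt.hasDerivAt
    rwa [hS0deriv] at h1
  have hS0cd : HasDerivAt (fun τ : ℂ => dslope Complex.sinh 0 (τ - a0)) 0 a0 := by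
    refine HasDerivAt.comp_sub_const a0 a0 ?_
    rwa [sub_self]
  have hexpd : HasDerivAt (fun τ : ℂ => Complex.exp (-Complex.I * (c : ℂ) * τ))
      (Complex.exp (-Complex.I * (c : ℂ) * a0) * (-Complex.I * (c : ℂ))) a0 := by
    have hlin : HasDerivAt (fun τ : ℂ => -Complex.I * (c : ℂ) * τ) (-Complex.I * (c : ℂ)) a0 := by
      simpa using (hasDerivAt_id a0).const_mul (-Complex.I * (c : ℂ))
    exact hlin.cexp
  have hNd := ((Complex.hasDerivAt_sinh a0).mul
      ((((Complex.hasDerivAt_sinh a0).pow 2).const_mul 6).const_add 7)).mul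
    hexpd
  have hDd := ((hS0cd.pow 2).neg).mul
    ((((Complex.hasDerivAt_sinh a0).pow 2).const_mul (1 + (χ : ℂ) ^ 2)).const_add ((χ : ℂ) ^ 2))
  have hh0d := hNd.div hDd hD0ne
  have hB0 : deriv (fun τ : ℂ =>
      Complex.sinh τ * (7 + 6 * Complex.sinh τ ^ 2) * Complex.exp (-Complex.I * (c : ℂ) * τ) /
        (-(dslope Complex.sinh 0 (τ - a0)) ^ 2 *
          ((χ : ℂ) ^ 2 + (1 + (χ : ℂ) ^ 2) * Complex.sinh τ ^ 2))) a0 =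
      -(c : ℂ) * Complex.exp (-(c : ℂ) * (Real.pi : ℂ) / 2) := by
    have hder := hh0d.deriv
    beta_reduce at hder
    erw [hder]
    simp only [Pi.mul_apply, Pi.pow_apply, Pi.neg_apply]
    rw [sub_self, hS0val, hsinh0, hcosh0, hexp0]
    rw [show -(1 : ℂ) ^ 2 * ((χ : ℂ) ^ 2 + (1 + (χ : ℂ) ^ 2) * (-Complex.I) ^ 2) = 1 from by
      linear_combination (-(1 + (χ : ℂ) ^ 2)) * Complex.I_sq]
    linear_combination ((c : ℂ) * Complex.exp (-(c : ℂ) * (Real.pi : ℂ) / 2) *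
      (6 * Complex.I ^ 2 + 1)) * Complex.I_sq
  obtain ⟨hna0, hex0⟩ := double_pole' h0anal hA0 hB0 heq0
  have hA0ne : -Complex.I * Complex.exp (-(c : ℂ) * (Real.pi : ℂ) / 2) ≠ 0 :=
    mul_ne_zero (neg_ne_zero.2 Complex.I_ne_zero) (Complex.exp_ne_zero _)
    -- ============ analysis in the strip ============
  have hden1π : ∀ τ : ℂ, -Real.pi < τ.im → τ.im < 0 → τ ≠ a0 →
      1 + Complex.sinh τ ^ 2 ≠ 0 := by
    intro τ h1 h2 h0 hcon
    have hfac : (Complex.sinh τ - Complex.I) * (Complex.sinh τ + Complex.I) = 0 := by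
      linear_combination hcon - Complex.I_sq
    rcases mul_eq_zero.1 hfac with hA | hB
    · have hA' : Complex.sinh τ = ((1 : ℝ) : ℂ) * Complex.I := by push_cast; linear_combination hA
      rcases key τ h1 h2 1 hA' with ⟨_, hsy⟩ | ⟨_, hcy⟩
      · nlinarith [Real.sin_neg_of_neg_of_neg_pi_lt h2 h1]
      · nlinarith [Real.one_le_cosh τ.re]
    · have hB' : Complex.sinh τ = ((-1 : ℝ) : ℂ) * Complex.I := by
        push_cast; linear_combination hB
      rcases key τ h1 h2 (-1) hB' with ⟨hre0, hsy⟩ | ⟨him, hcy⟩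
      · have hcy0 : Real.cos τ.im = 0 := by
          have hh := Real.sin_sq_add_cos_sq τ.im
          have h3 : Real.cos τ.im ^ 2 = 0 := by nlinarith
          exact pow_eq_zero_iff two_ne_zero |>.1 h3
        have hy := hcoszero _ h1 h2 hcy0
        exact h0 (by rw [ha0I]; exact Complex.ext (by simp [hre0]) (by simp [hy]))
      · have hre0 : τ.re = 0 := by
          by_contra hne
          have h4 := Real.one_lt_cosh.2 hne
          nlinarith
        exact h0 (by rw [ha0I]; exact Complex.ext (by simp [hre0]) (by simp [him]))
  have hden2π : ∀ τ : ℂ, -Real.pi < τ.im → τ.im < 0 → τ ≠ a1 → τ ≠ a2 →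
      (χ : ℂ) ^ 2 + (1 + (χ : ℂ) ^ 2) * Complex.sinh τ ^ 2 ≠ 0 := by
    intro τ h1 h2 hτ1 hτ2 hcon
    have hfac0 : (1 + (χ : ℂ) ^ 2) * ((Complex.sinh τ - (s : ℂ) * Complex.I) *
        (Complex.sinh τ + (s : ℂ) * Complex.I)) = 0 := by
      rw [← hMfac τ]; exact hcon
    rcases mul_eq_zero.1 hfac0 with h1K | hfac
    · exact hXne h1K
    rcases mul_eq_zero.1 hfac with hA | hB
    · have hA' : Complex.sinh τ = (s : ℂ) * Complex.I := by linear_combination hA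
      rcases key τ h1 h2 s hA' with ⟨_, hsy⟩ | ⟨_, hcy⟩
      · nlinarith [Real.sin_neg_of_neg_of_neg_pi_lt h2 h1]
      · nlinarith [Real.one_le_cosh τ.re]
    · have hB' : Complex.sinh τ = ((-s : ℝ) : ℂ) * Complex.I := by
        push_cast; linear_combination hB
      rcases key τ h1 h2 (-s) hB' with ⟨hre0, hsy⟩ | ⟨_, hcy⟩
      · by_cases hu2 : -τ.im ≤ Real.pi / 2
        · have harc : Real.arcsin (Real.sin (-τ.im)) = -τ.im :=
            Real.arcsin_sin (by linarith) hu2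
          rw [Real.sin_neg, hsy, neg_neg] at harc
          exact hτ1 (by
            rw [ha1I]
            exact Complex.ext (by simp [hre0]) (by simp; linarith [harc]))
        · have harc : Real.arcsin (Real.sin (Real.pi - -τ.im)) = Real.pi - -τ.im := by
            apply Real.arcsin_sin
            · nlinarith [Real.pi_pos]
            · nlinarith [Real.pi_pos]
          rw [Real.sin_pi_sub, Real.sin_neg, hsy, neg_neg] at harc
          exact hτ2 (by
            rw [ha2I]
            exact Complex.ext (by simp [hre0]) (by simp; linarith [harc]))
      · nlinarith [Real.one_le_cosh τ.re]
  have hdiff : ∀ τ : ℂ, -Real.pi < τ.im → τ.im < 0 → τ ≠ a0 → τ ≠ a1 → τ ≠ a2 →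
      DifferentiableAt ℂ (f1 χ c) τ := by
    intro τ h1 h2 h0 hτ1 hτ2
    have e1 := hden1π τ h1 h2 h0
    have e2 := hden2π τ h1 h2 hτ1 hτ2
    show DifferentiableAt ℂ (fun τ : ℂ =>
      (Complex.sinh τ / (1 + Complex.sinh τ ^ 2)) *
        ((7 + 6 * Complex.sinh τ ^ 2) /
          ((χ : ℂ) ^ 2 + (1 + (χ : ℂ) ^ 2) * Complex.sinh τ ^ 2)) *
        Complex.exp (-Complex.I * (c : ℂ) * τ)) τ
    apply DifferentiableAt.mul
    apply DifferentiableAt.mul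
    · exact (Complex.differentiable_sinh.differentiableAt).div
        (((Complex.differentiable_sinh.pow 2).const_add 1).differentiableAt) e1
    · exact ((((Complex.differentiable_sinh.pow 2).const_mul 6).const_add 7).differentiableAt).div
        ((((Complex.differentiable_sinh.pow 2).const_mul _).const_add _).differentiableAt) e2
    · exact ((differentiable_fun_id.const_mul (-Complex.I * (c : ℂ))).cexp).differentiableAt
  exact ⟨hdiff, hna0 hA0ne, hna1 hR1ne, hna2 hR2ne, hex1, hex2, hex0⟩
end
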